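/- arXiv:1103.2106 — 7 statements merged into one kernel-verified Lean document; each statement's English description precedes it below -/
import Mathlib

section
/- Suppose β, r > 0, y ≥ 0, and g is a function on the primes with |g(p)| ≤ 1 for all primes p; set G(s) := ∏_{p ≤ y prime} (1 − g(p)p^{−s})^{−1}. Let F be any function integrable on the vertical segment [β, β+ir]. Then |∫_β^{β+ir} G(s)F(s) ds| ≤ M·( |G(β)| + √( ∫_β^{β+ir} |(G'/G)(s)|² d|s| · ∫_β^{β+ir} |G(s)|² d|s| ) ), where M := sup_{0 ≤ t ≤ r} |∫_{β+it}^{β+ir} F(s) ds|. -/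
/-!
Put `h(τ) = G(β + iτ)` and `Φ(t) = ∫_t^r F(β + iτ) dτ`, so that `‖Φ‖ ≤ M` on `[0, r]`. Writing
`h(t) = h(0) + ∫_0^t h'` and exchanging the order of integration gives the integration by parts
`∫_0^r h F = h(0) Φ(0) + ∫_0^r h' Φ`, valid although `F` is merely integrable. Hence the integral
is at most `M (‖G(β)‖ + ∫_0^r ‖G'‖)`, and `‖G'‖ = ‖G'/G‖ ‖G‖` with Cauchy–Schwarz bounds the last
integral. `G` is holomorphic and zero-free on `Re s > 0` because each Euler factor satisfies
`‖g(p) p^{-s}‖ < 1` there.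
-/

open Complex MeasureTheory Set

noncomputable def primesUpTo (y : ℝ) : Finset ℕ := (Finset.Iic ⌊y⌋₊).filter Nat.Prime

section IntegrationByParts

variable {a b : ℝ} {d h h' F : ℝ → ℂ}

theorem integral_primitive_mul_eq_integral_mul_tail (hab : a ≤ b)
    (hd : IntervalIntegrable d volume a b) (hF : IntervalIntegrable F volume a b) :
    ∫ t in a..b, (∫ u in a..t, d u) * F t = ∫ u in a..b, d u * ∫ t in u..b, F t := by
  set μ := volume.restrict (Ioc a b)
  set K : ℝ → ℝ → ℂ := fun u t =>
    {p : ℝ × ℝ | p.1 ≤ p.2}.indicator (fun p => d p.1 * F p.2) (u, t)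
  have hK : Integrable (Function.uncurry K) (μ.prod μ) :=
    (hd.1.mul_prod hF.1).indicator (measurableSet_le measurable_fst measurable_snd)
  have hinner_t : ∀ t ∈ Ioc a b, ∫ u, K u t ∂μ = (∫ u in a..t, d u) * F t := by
    intro t ht
    have : (fun u => K u t) = (Iic t).indicator (fun u => d u * F t) := by
      ext u; by_cases hu : u ≤ t <;> simp [K, hu]
    rw [this, setIntegral_indicator measurableSet_Iic, Ioc_inter_Iic, min_eq_right ht.2,
      integral_mul_const, intervalIntegral.integral_of_le ht.1.le]
  have hinner_u : ∀ u ∈ Ioc a b, ∫ t, K u t ∂μ = d u * ∫ t in u..b, F t := by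
    intro u hu
    have : (fun t => K u t) = (Ici u).indicator (fun t => d u * F t) := by
      ext t; by_cases ht : u ≤ t <;> simp [K, ht]
    have hset : Ioc a b ∩ Ici u = Icc u b := by
      ext t
      simp only [mem_inter_iff, mem_Ioc, mem_Icc, mem_Ici]
      exact ⟨fun ht => ⟨ht.2, ht.1.2⟩, fun ht => ⟨⟨hu.1.trans_le ht.1, ht.2⟩, ht.1⟩⟩
    rw [this, setIntegral_indicator measurableSet_Ici, hset, integral_Icc_eq_integral_Ioc,
      integral_const_mul, intervalIntegral.integral_of_le hu.2]
  calc ∫ t in a..b, (∫ u in a..t, d u) * F t = ∫ t, ∫ u, K u t ∂μ ∂μ := by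
        rw [intervalIntegral.integral_of_le hab]
        exact (setIntegral_congr_fun measurableSet_Ioc hinner_t).symm
    _ = ∫ u, ∫ t, K u t ∂μ ∂μ := (integral_integral_swap hK).symm
    _ = ∫ u in a..b, d u * ∫ t in u..b, F t := by
        rw [intervalIntegral.integral_of_le hab]
        exact setIntegral_congr_fun measurableSet_Ioc hinner_u

theorem integral_mul_eq_mul_integral_add_integral_deriv_mul_tail (hab : a ≤ b)
    (hh : ∀ t ∈ Icc a b, HasDerivAt h (h' t) t) (hh' : IntervalIntegrable h' volume a b)
    (hF : IntervalIntegrable F volume a b) :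
    ∫ t in a..b, h t * F t = (h a * ∫ t in a..b, F t) + ∫ u in a..b, h' u * ∫ t in u..b, F t := by
  have hftc : ∀ t ∈ Icc a b, h t = h a + ∫ u in a..t, h' u := fun t ht => by
    rw [intervalIntegral.integral_eq_sub_of_hasDerivAt
      (fun x hx => hh x (Icc_subset_Icc_right ht.2 (uIcc_of_le ht.1 ▸ hx)))
      (hh'.mono_set (by rw [uIcc_of_le ht.1, uIcc_of_le hab]; exact Icc_subset_Icc_right ht.2))]
    ring
  have hprim : ContinuousOn (fun t => ∫ u in a..t, h' u) (uIcc a b) :=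
    intervalIntegral.continuousOn_primitive_interval' hh' left_mem_uIcc
  calc ∫ t in a..b, h t * F t = ∫ t in a..b, (h a * F t + (∫ u in a..t, h' u) * F t) :=
        intervalIntegral.integral_congr fun t ht => by
          rw [hftc t (uIcc_of_le hab ▸ ht)]; ring
    _ = _ := by
        rw [intervalIntegral.integral_add (hF.const_mul _) (hF.continuousOn_mul hprim),
          intervalIntegral.integral_const_mul,
          integral_primitive_mul_eq_integral_mul_tail hab hh' hF]

theorem norm_integral_mul_le_of_norm_integral_tail_le {M : ℝ} (hab : a ≤ b)
    (hh : ∀ t ∈ Icc a b, HasDerivAt h (h' t) t) (hh' : IntervalIntegrable h' volume a b)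
    (hF : IntervalIntegrable F volume a b) (hM : ∀ t ∈ Icc a b, ‖∫ τ in t..b, F τ‖ ≤ M) :
    ‖∫ t in a..b, h t * F t‖ ≤ M * (‖h a‖ + ∫ t in a..b, ‖h' t‖) := by
  have htail : ‖∫ u in a..b, h' u * ∫ t in u..b, F t‖ ≤ ∫ u in a..b, ‖h' u‖ * M := by
    refine intervalIntegral.norm_integral_le_of_norm_le hab
      (Filter.Eventually.of_forall fun u hu => ?_) (hh'.norm.mul_const M)
    rw [norm_mul]
    exact mul_le_mul_of_nonneg_left (hM u (Ioc_subset_Icc_self hu)) (norm_nonneg _)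
  rw [integral_mul_eq_mul_integral_add_integral_deriv_mul_tail hab hh hh' hF]
  calc _ ≤ ‖h a‖ * ‖∫ t in a..b, F t‖ + ∫ u in a..b, ‖h' u‖ * M :=
        (norm_add_le _ _).trans (add_le_add (norm_mul _ _).le htail)
    _ ≤ ‖h a‖ * M + (∫ u in a..b, ‖h' u‖) * M := by
        rw [intervalIntegral.integral_mul_const]
        gcongr
        exact hM a (left_mem_Icc.mpr hab)
    _ = M * (‖h a‖ + ∫ t in a..b, ‖h' t‖) := by ring

end IntegrationByParts

theorem norm_integral_le_iSup_norm_integral_tail {a b t : ℝ} {F : ℝ → ℂ}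
    (hF : IntervalIntegrable F volume a b) (ht : t ∈ Icc a b) :
    ‖∫ τ in t..b, F τ‖ ≤ ⨆ s : Icc a b, ‖∫ τ in (s : ℝ)..b, F τ‖ := by
  refine le_ciSup (f := fun s : Icc a b => ‖∫ τ in (s : ℝ)..b, F τ‖)
    ⟨∫ τ in a..b, ‖F τ‖, ?_⟩ ⟨t, ht⟩
  rintro _ ⟨s, rfl⟩
  exact (intervalIntegral.norm_integral_le_integral_norm s.2.2).trans <|
    intervalIntegral.integral_mono_interval s.2.1 s.2.2 le_rfl
      (Filter.Eventually.of_forall fun _ => norm_nonneg _) hF.norm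

theorem integral_norm_mul_norm_le_sqrt {E : Type*} [NormedAddCommGroup E] {a b : ℝ} (hab : a ≤ b)
    {f g : ℝ → E} (hf : ContinuousOn f (Icc a b)) (hg : ContinuousOn g (Icc a b)) :
    ∫ t in a..b, ‖f t‖ * ‖g t‖ ≤
      √((∫ t in a..b, ‖f t‖ ^ 2) * ∫ t in a..b, ‖g t‖ ^ 2) := by
  have hmemLp : ∀ φ : ℝ → E, ContinuousOn φ (Icc a b) →
      MemLp φ (ENNReal.ofReal 2) (volume.restrict (Ioc a b)) := fun φ hφ => by
    obtain ⟨C, hC⟩ := isCompact_Icc.exists_bound_of_continuousOn hφ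
    refine MemLp.of_bound
      ((hφ.mono Ioc_subset_Icc_self).aestronglyMeasurable measurableSet_Ioc) C ?_
    filter_upwards [ae_restrict_mem measurableSet_Ioc] with t ht
    exact hC t (Ioc_subset_Icc_self ht)
  have hsq : ∀ φ : ℝ → E, ∫ t in a..b, ‖φ t‖ ^ 2 = ∫ t in Ioc a b, ‖φ t‖ ^ (2 : ℝ) := fun φ => by
    simp_rw [intervalIntegral.integral_of_le hab, Real.rpow_two]
  have hnonneg : 0 ≤ ∫ t in a..b, ‖f t‖ ^ 2 :=
    intervalIntegral.integral_nonneg hab fun _ _ => sq_nonneg _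
  rw [Real.sqrt_mul hnonneg, Real.sqrt_eq_rpow, Real.sqrt_eq_rpow, hsq, hsq,
    intervalIntegral.integral_of_le hab]
  exact integral_mul_norm_le_Lp_mul_Lq Real.HolderConjugate.two_two (hmemLp f hf) (hmemLp g hg)

theorem hasDerivAt_comp_vertical_line {G : ℂ → ℂ} {β τ : ℝ}
    (hG : DifferentiableAt ℂ G ((β : ℂ) + (τ : ℂ) * I)) :
    HasDerivAt (fun t : ℝ => G ((β : ℂ) + (t : ℂ) * I))
      (I * deriv G ((β : ℂ) + (τ : ℂ) * I)) τ := by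
  have hline : HasDerivAt (fun t : ℝ => (β : ℂ) + (t : ℂ) * I) I τ := by
    simpa using ((hasDerivAt_id τ).ofReal_comp.mul_const I).const_add (β : ℂ)
  simpa [Function.comp_def] using hG.hasDerivAt.scomp τ hline

theorem continuous_deriv_comp_vertical_line {G : ℂ → ℂ} {U : Set ℂ} {β : ℝ} (hU : IsOpen U)
    (hG : DifferentiableOn ℂ G U) (hline : ∀ τ : ℝ, (β : ℂ) + (τ : ℂ) * I ∈ U) :
    Continuous fun τ : ℝ => deriv G ((β : ℂ) + (τ : ℂ) * I) :=
  (hG.analyticOnNhd hU).deriv.continuousOn.comp_continuous (by fun_prop) hline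

noncomputable def eulerProductUpTo (g : ℕ → ℂ) (y : ℝ) (s : ℂ) : ℂ :=
  ∏ p ∈ primesUpTo y, (1 - g p * (p : ℂ) ^ (-s))⁻¹

theorem one_sub_mul_natCast_cpow_neg_ne_zero {c : ℂ} (hc : ‖c‖ ≤ 1) {p : ℕ} (hp : 1 < p)
    {s : ℂ} (hs : 0 < s.re) : 1 - c * (p : ℂ) ^ (-s) ≠ 0 := by
  have hp' : (1 : ℝ) < p := by exact_mod_cast hp
  have hlt : ‖c * (p : ℂ) ^ (-s)‖ < 1 := by
    rw [norm_mul, norm_natCast_cpow_of_pos (by omega), neg_re]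
    exact mul_lt_one_of_nonneg_of_lt_one_right hc (by positivity)
      (Real.rpow_lt_one_of_one_lt_of_neg hp' (neg_lt_zero.mpr hs))
  intro h
  rw [← sub_eq_zero.mp h, norm_one] at hlt
  exact lt_irrefl _ hlt

section EulerProduct

variable {g : ℕ → ℂ} {y : ℝ}

theorem eulerProductUpTo_factor_ne_zero (hg : ∀ p : ℕ, p.Prime → ‖g p‖ ≤ 1) {p : ℕ}
    (hp : p ∈ primesUpTo y) {s : ℂ} (hs : 0 < s.re) :
    1 - g p * (p : ℂ) ^ (-s) ≠ 0 :=
  have hp : p.Prime := (Finset.mem_filter.mp hp).2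
  one_sub_mul_natCast_cpow_neg_ne_zero (hg p hp) hp.one_lt hs

theorem eulerProductUpTo_ne_zero (hg : ∀ p : ℕ, p.Prime → ‖g p‖ ≤ 1) {s : ℂ} (hs : 0 < s.re) :
    eulerProductUpTo g y s ≠ 0 :=
  Finset.prod_ne_zero_iff.mpr fun _ hp => inv_ne_zero (eulerProductUpTo_factor_ne_zero hg hp hs)

theorem differentiableOn_eulerProductUpTo (hg : ∀ p : ℕ, p.Prime → ‖g p‖ ≤ 1) :
    DifferentiableOn ℂ (eulerProductUpTo g y) {s : ℂ | 0 < s.re} := by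
  intro s hs
  refine (DifferentiableAt.fun_finsetProd fun p hp => ?_).differentiableWithinAt
  have hp0 : (p : ℂ) ≠ 0 := Nat.cast_ne_zero.mpr (Finset.mem_filter.mp hp).2.ne_zero
  exact ((differentiableAt_const _).sub ((differentiableAt_const _).mul
    (differentiableAt_id.neg.const_cpow (Or.inl hp0)))).inv
    (eulerProductUpTo_factor_ne_zero hg hp hs)

end EulerProduct

theorem euler_product_integral_bound_general
    (β r y : ℝ) (hβ : 0 < β) (hr : 0 < r)
    (g : ℕ → ℂ) (hg : ∀ p : ℕ, p.Prime → ‖g p‖ ≤ 1)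
    (G : ℂ → ℂ)
    (hG : G = fun s => ∏ p ∈ primesUpTo y, (1 - g p * (p : ℂ) ^ (-s))⁻¹)
    (F : ℂ → ℂ)
    (hF : IntervalIntegrable (fun τ : ℝ => F ((β : ℂ) + (τ : ℂ) * Complex.I)) volume 0 r)
    (M : ℝ)
    (hM : M = ⨆ t : Set.Icc (0 : ℝ) r,
      ‖∫ τ in (t : ℝ)..r, F ((β : ℂ) + (τ : ℂ) * Complex.I)‖) :
    ‖∫ τ in (0 : ℝ)..r,
        G ((β : ℂ) + (τ : ℂ) * Complex.I) * F ((β : ℂ) + (τ : ℂ) * Complex.I)‖ ≤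
      M * (‖G (β : ℂ)‖ +
        Real.sqrt
          ((∫ τ in (0 : ℝ)..r,
              ‖deriv G ((β : ℂ) + (τ : ℂ) * Complex.I) /
                G ((β : ℂ) + (τ : ℂ) * Complex.I)‖ ^ 2) *
            (∫ τ in (0 : ℝ)..r, ‖G ((β : ℂ) + (τ : ℂ) * Complex.I)‖ ^ 2))) := by
  replace hG : G = eulerProductUpTo g y := hG
  have hU : IsOpen {s : ℂ | 0 < s.re} := isOpen_lt continuous_const continuous_re
  have hline : ∀ τ : ℝ, (β : ℂ) + (τ : ℂ) * I ∈ {s : ℂ | 0 < s.re} := by simp [hβ]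
  have hdiff : DifferentiableOn ℂ G {s : ℂ | 0 < s.re} := hG ▸ differentiableOn_eulerProductUpTo hg
  have hG' : Continuous fun τ : ℝ => deriv G ((β : ℂ) + (τ : ℂ) * I) :=
    continuous_deriv_comp_vertical_line hU hdiff hline
  have hderiv (τ : ℝ) : HasDerivAt (fun t : ℝ => G ((β : ℂ) + (t : ℂ) * I))
      (I * deriv G ((β : ℂ) + (τ : ℂ) * I)) τ :=
    hasDerivAt_comp_vertical_line ((hdiff _ (hline τ)).differentiableAt (hU.mem_nhds (hline τ)))
  have hGne (τ : ℝ) : G ((β : ℂ) + (τ : ℂ) * I) ≠ 0 := hG ▸ eulerProductUpTo_ne_zero hg (hline τ)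
  have hGcont : Continuous fun τ : ℝ => G ((β : ℂ) + (τ : ℂ) * I) :=
    continuous_iff_continuousAt.mpr fun τ => (hderiv τ).continuousAt
  have hMbound : ∀ t ∈ Icc 0 r, ‖∫ τ in t..r, F ((β : ℂ) + (τ : ℂ) * I)‖ ≤ M :=
    fun t ht => hM ▸ norm_integral_le_iSup_norm_integral_tail hF ht
  have hM0 : 0 ≤ M := (norm_nonneg _).trans (hMbound r (right_mem_Icc.mpr hr.le))
  calc _ ≤ M * (‖G ((β : ℂ) + ((0 : ℝ) : ℂ) * I)‖ +
        ∫ τ in (0 : ℝ)..r, ‖I * deriv G ((β : ℂ) + (τ : ℂ) * I)‖) :=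
        norm_integral_mul_le_of_norm_integral_tail_le hr.le (fun τ _ => hderiv τ)
          ((continuous_const.mul hG').intervalIntegrable 0 r) hF hMbound
    _ = M * (‖G β‖ + ∫ τ in (0 : ℝ)..r,
          ‖deriv G ((β : ℂ) + (τ : ℂ) * I) / G ((β : ℂ) + (τ : ℂ) * I)‖ *
            ‖G ((β : ℂ) + (τ : ℂ) * I)‖) := by
        simp_rw [← norm_mul, div_mul_cancel₀ _ (hGne _), norm_mul, norm_I, one_mul]
        simp
    _ ≤ _ := by
        gcongr
        exact integral_norm_mul_norm_le_sqrt hr.le (hG'.div hGcont hGne).continuousOn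
          hGcont.continuousOn

/-- Lemma 1: a Fubini/Cauchy–Schwarz bound for integrals of an Euler product
`G(s) = ∏_{p ≤ y} (1 - g(p)p^{-s})⁻¹` against an integrable function `F` along the
vertical segment `[β, β + ir]`. -/
theorem euler_product_integral_bound
    (β r y : ℝ) (hβ : 0 < β) (hr : 0 < r) (hy : 0 ≤ y)
    (g : ℕ → ℂ) (hg : ∀ p : ℕ, p.Prime → ‖g p‖ ≤ 1)
    (G : ℂ → ℂ)
    (hG : G = fun s => ∏ p ∈ primesUpTo y, (1 - g p * (p : ℂ) ^ (-s))⁻¹)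
    (F : ℂ → ℂ)
    (hF : IntervalIntegrable (fun τ : ℝ => F ((β : ℂ) + (τ : ℂ) * Complex.I)) volume 0 r)
    (M : ℝ)
    (hM : M = ⨆ t : Set.Icc (0 : ℝ) r,
      ‖∫ τ in (t : ℝ)..r, F ((β : ℂ) + (τ : ℂ) * Complex.I)‖) :
    ‖∫ τ in (0 : ℝ)..r,
        G ((β : ℂ) + (τ : ℂ) * Complex.I) * F ((β : ℂ) + (τ : ℂ) * Complex.I)‖ ≤
      M * (‖G (β : ℂ)‖ +
        Real.sqrt
          ((∫ τ in (0 : ℝ)..r,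
              ‖deriv G ((β : ℂ) + (τ : ℂ) * Complex.I) /
                G ((β : ℂ) + (τ : ℂ) * Complex.I)‖ ^ 2) *
            (∫ τ in (0 : ℝ)..r, ‖G ((β : ℂ) + (τ : ℂ) * Complex.I)‖ ^ 2))) :=
  euler_product_integral_bound_general β r y hβ hr g hg G hG F hF M hM
end

section
/- Suppose β, r > 0, y ≥ 0, and g is a function on the primes with |g(p)| ≤ 1 for all primes p; set G(s) := ∏_{p ≤ y prime} (1 − g(p)p^{−s})^{−1} and G*(s) := ∏_{p ≤ √y prime} (1 − g(p)p^{−s})^{−1}. Let F be any function integrable on the vertical segment [β, β+ir]. Then |∫_β^{β+ir} G(s)F(s) ds| ≤ M*·( |G*(β)| + √( ∫_β^{β+ir} |(G'/G)(s)|² d|s| · ∫_β^{β+ir} |G*(s)|² d|s| ) ), where M* := sup_{0 ≤ t ≤ r} ( |∫_{β+it}^{β+ir} F(s) ds| · ∏_{√y < p ≤ y prime} |1 − g(p)p^{−β−it}|^{−1} ). -/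
open Complex MeasureTheory

/-!
Put `Φ(t) = ∫_t^r F(β + iτ) dτ` and `u(τ) = G(β + iτ)`, so that `u' = i G'(β + iτ)`. Writing
`u(τ) = u(0) + ∫_0^τ u'` and exchanging the order of integration gives
`∫_0^r u F = u(0) Φ(0) + ∫_0^r u'(σ) Φ(σ) dσ`.
Split `G = G* B`, where `B` is the product over `√y < p ≤ y`. Then `|Φ B| ≤ M*` on `[0, r]` and
`|u'| = |G'/G| |G*| |B|`, so the two terms are at most `M* |G*(β)|` and `M* ∫ |G'/G| |G*|`, and
Cauchy–Schwarz bounds the last integral.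
-/

open Set

theorem integral_mul_le_sqrt_integral_sq_mul_integral_sq {a b : ℝ} (hab : a ≤ b) {f g : ℝ → ℝ}
    (hf : ContinuousOn f (Icc a b)) (hg : ContinuousOn g (Icc a b))
    (hf0 : ∀ x, 0 ≤ f x) (hg0 : ∀ x, 0 ≤ g x) :
    ∫ x in a..b, f x * g x ≤ √((∫ x in a..b, f x ^ 2) * ∫ x in a..b, g x ^ 2) := by
  have memL2 : ∀ h : ℝ → ℝ, ContinuousOn h (Icc a b) →
      MemLp h (ENNReal.ofReal 2) (volume.restrict (Ioc a b)) := by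
    intro h hh
    obtain ⟨C, hC⟩ := isCompact_Icc.exists_bound_of_continuousOn hh
    exact MemLp.of_bound ((hh.mono Ioc_subset_Icc_self).aestronglyMeasurable measurableSet_Ioc) C
      ((ae_restrict_mem measurableSet_Ioc).mono fun x hx => hC x (Ioc_subset_Icc_self hx))
  have holder := integral_mul_le_Lp_mul_Lq_of_nonneg Real.HolderConjugate.two_two
    (.of_forall hf0) (.of_forall hg0) (memL2 f hf) (memL2 g hg)
  simp only [Real.rpow_two] at holder
  rw [intervalIntegral.integral_of_le hab, intervalIntegral.integral_of_le hab,
    intervalIntegral.integral_of_le hab, Real.sqrt_eq_rpow, Real.mul_rpow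
      (integral_nonneg fun x => sq_nonneg _) (integral_nonneg fun x => sq_nonneg _)]
  simpa [one_div] using holder

section

variable {𝕜 : Type*} [RCLike 𝕜]

theorem IntervalIntegrable.continuousOn_integral_left {a b : ℝ} {f : ℝ → 𝕜}
    (hf : IntervalIntegrable f volume a b) (hab : a ≤ b) :
    ContinuousOn (fun t => ∫ τ in t..b, f τ) (Icc a b) := by
  have hfIcc : IntegrableOn f (uIcc a b) := by
    rw [uIcc_of_le hab]; exact (intervalIntegrable_iff_integrableOn_Icc_of_le hab).mp hf
  simpa only [uIcc_of_le hab] using intervalIntegral.continuousOn_primitive_interval_left hfIcc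

theorem integral_primitive_mul_eq_integral_mul_integral {a b : ℝ} (hab : a ≤ b) {c f : ℝ → 𝕜}
    (hc : IntervalIntegrable c volume a b) (hf : IntervalIntegrable f volume a b) :
    ∫ τ in a..b, (∫ σ in a..τ, c σ) * f τ = ∫ σ in a..b, c σ * ∫ τ in σ..b, f τ := by
  set μ : Measure ℝ := volume.restrict (Ioc a b)
  set W : ℝ × ℝ → 𝕜 := {z : ℝ × ℝ | z.1 ≤ z.2}.indicator fun z => c z.1 * f z.2
  have hW : Integrable W (μ.prod μ) :=
    (hc.1.mul_prod hf.1).indicator (isClosed_le continuous_fst continuous_snd).measurableSet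
  have inner_fst : ∀ σ ∈ Ioc a b, ∫ τ, W (σ, τ) ∂μ = c σ * ∫ τ in σ..b, f τ := by
    intro σ hσ
    have hsec : (fun τ => W (σ, τ)) = (Ici σ).indicator fun τ => c σ * f τ := by
      ext τ; by_cases h : σ ≤ τ <;> simp [W, indicator, h]
    rw [hsec, integral_indicator measurableSet_Ici, Measure.restrict_restrict measurableSet_Ici,
      show Ici σ ∩ Ioc a b = Icc σ b from
        ext fun x => ⟨fun h => ⟨h.1, h.2.2⟩, fun h => ⟨h.1, hσ.1.trans_le h.1, h.2⟩⟩,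
      integral_Icc_eq_integral_Ioc, integral_const_mul, intervalIntegral.integral_of_le hσ.2]
  have inner_snd : ∀ τ ∈ Ioc a b, ∫ σ, W (σ, τ) ∂μ = (∫ σ in a..τ, c σ) * f τ := by
    intro τ hτ
    have hsec : (fun σ => W (σ, τ)) = (Iic τ).indicator fun σ => c σ * f τ := by
      ext σ; by_cases h : σ ≤ τ <;> simp [W, indicator, h]
    rw [hsec, integral_indicator measurableSet_Iic, Measure.restrict_restrict measurableSet_Iic,
      show Iic τ ∩ Ioc a b = Ioc a τ from
        ext fun x => ⟨fun h => ⟨h.2.1, h.1⟩, fun h => ⟨h.2, h.1, h.2.trans hτ.2⟩⟩,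
      integral_mul_const, intervalIntegral.integral_of_le hτ.1.le]
  rw [intervalIntegral.integral_of_le hab, intervalIntegral.integral_of_le hab,
    ← setIntegral_congr_fun measurableSet_Ioc inner_fst,
    ← setIntegral_congr_fun measurableSet_Ioc inner_snd]
  exact (integral_integral_swap (f := fun σ τ => W (σ, τ)) hW).symm

theorem integral_mul_eq_mul_integral_add_integral_deriv_mul {a b : ℝ} (hab : a ≤ b)
    {u c f : ℝ → 𝕜} (hu : ∀ τ ∈ Icc a b, HasDerivAt u (c τ) τ)
    (hc : IntervalIntegrable c volume a b) (hf : IntervalIntegrable f volume a b) :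
    ∫ τ in a..b, u τ * f τ = u a * (∫ τ in a..b, f τ) + ∫ σ in a..b, c σ * ∫ τ in σ..b, f τ := by
  have ftc : ∀ τ ∈ uIcc a b, u τ = u a + ∫ σ in a..τ, c σ := by
    intro τ hτ
    rw [uIcc_of_le hab] at hτ
    have hsub : uIcc a τ ⊆ Icc a b := by rw [uIcc_of_le hτ.1]; exact Icc_subset_Icc_right hτ.2
    rw [intervalIntegral.integral_eq_sub_of_hasDerivAt (fun x hx => hu x (hsub hx))
      (hc.mono_set (uIcc_of_le hab ▸ hsub)), add_sub_cancel]
  have hprim : ContinuousOn (fun τ => ∫ σ in a..τ, c σ) (uIcc a b) :=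
    intervalIntegral.continuousOn_primitive_interval' hc left_mem_uIcc
  rw [intervalIntegral.integral_congr fun τ hτ => by rw [ftc τ hτ, add_mul],
    intervalIntegral.integral_add (hf.const_mul _) (hf.continuousOn_mul hprim),
    intervalIntegral.integral_const_mul, integral_primitive_mul_eq_integral_mul_integral hab hc hf]

theorem norm_integral_mul_le_of_eq_mul {a b M : ℝ} (hab : a ≤ b) {u c f A B : ℝ → 𝕜}
    (hu : ∀ τ, HasDerivAt u (c τ) τ) (hc : Continuous c) (hu0 : ∀ τ, u τ ≠ 0)
    (huAB : ∀ τ, u τ = A τ * B τ) (hA : Continuous A) (hf : IntervalIntegrable f volume a b)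
    (hM : ∀ t ∈ Icc a b, ‖∫ τ in t..b, f τ‖ * ‖B t‖ ≤ M) :
    ‖∫ τ in a..b, u τ * f τ‖ ≤
      M * (‖A a‖ + √((∫ τ in a..b, ‖c τ / u τ‖ ^ 2) * ∫ τ in a..b, ‖A τ‖ ^ 2)) := by
  set Φ : ℝ → 𝕜 := fun t => ∫ τ in t..b, f τ
  have hΦ : ContinuousOn Φ (Icc a b) := hf.continuousOn_integral_left hab
  have hq : Continuous fun τ => ‖c τ / u τ‖ :=
    (hc.div (continuous_iff_continuousAt.2 fun τ => (hu τ).continuousAt) hu0).norm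
  have hM0 : 0 ≤ M := by simpa using hM b ⟨hab, le_rfl⟩
  have pointwise : ∀ σ ∈ Icc a b, ‖c σ * Φ σ‖ ≤ M * (‖c σ / u σ‖ * ‖A σ‖) := by
    intro σ hσ
    have hc_eq : ‖c σ‖ = ‖c σ / u σ‖ * ‖A σ‖ * ‖B σ‖ := by
      rw [mul_assoc, ← norm_mul, ← huAB, norm_div, div_mul_cancel₀ _ (norm_ne_zero_iff.2 (hu0 σ))]
    calc ‖c σ * Φ σ‖ = ‖c σ / u σ‖ * ‖A σ‖ * (‖Φ σ‖ * ‖B σ‖) := by rw [norm_mul, hc_eq]; ring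
      _ ≤ ‖c σ / u σ‖ * ‖A σ‖ * M := by gcongr; exact hM σ hσ
      _ = M * (‖c σ / u σ‖ * ‖A σ‖) := mul_comm _ _
  rw [integral_mul_eq_mul_integral_add_integral_deriv_mul hab (fun τ _ => hu τ)
    (hc.intervalIntegrable a b) hf]
  calc ‖u a * Φ a + ∫ σ in a..b, c σ * Φ σ‖
      ≤ ‖u a * Φ a‖ + ∫ σ in a..b, ‖c σ * Φ σ‖ :=
        (norm_add_le _ _).trans
          (by gcongr; exact intervalIntegral.norm_integral_le_integral_norm hab)
    _ ≤ M * ‖A a‖ + ∫ σ in a..b, M * (‖c σ / u σ‖ * ‖A σ‖) := by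
        gcongr ?_ + ?_
        · rw [huAB, norm_mul, norm_mul]
          nlinarith [hM a ⟨le_rfl, hab⟩, norm_nonneg (A a)]
        · refine intervalIntegral.integral_mono_on hab ?_ ?_ pointwise
          · exact ((hc.continuousOn.mul hΦ).norm).intervalIntegrable_of_Icc hab
          · exact (continuous_const.mul (hq.mul hA.norm)).intervalIntegrable a b
    _ = M * (‖A a‖ + ∫ σ in a..b, ‖c σ / u σ‖ * ‖A σ‖) := by
        rw [intervalIntegral.integral_const_mul, mul_add]
    _ ≤ M * (‖A a‖ + √((∫ τ in a..b, ‖c τ / u τ‖ ^ 2) * ∫ τ in a..b, ‖A τ‖ ^ 2)) := by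
        gcongr
        exact integral_mul_le_sqrt_integral_sq_mul_integral_sq hab hq.continuousOn
          hA.norm.continuousOn (fun _ => norm_nonneg _) fun _ => norm_nonneg _

end

theorem primesUpTo_filter_not_lt_sqrt (y : ℝ) :
    (primesUpTo y).filter (fun p : ℕ => ¬ √y < p) = primesUpTo √y := by
  ext p
  simp only [primesUpTo, Finset.mem_filter, Finset.mem_Iic, not_lt]
  constructor
  · rintro ⟨⟨-, hp⟩, hle⟩
    exact ⟨Nat.le_floor hle, hp⟩
  · rintro ⟨hps, hp⟩
    have hle : (p : ℝ) ≤ √y := (Nat.le_floor_iff (Real.sqrt_nonneg y)).mp hps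
    have hp1 : (1 : ℝ) ≤ p := by exact_mod_cast hp.one_lt.le
    have hpy : (p : ℝ) ^ 2 ≤ y := (Real.le_sqrt' (by linarith)).mp hle
    exact ⟨⟨Nat.le_floor (by nlinarith), hp⟩, hle⟩

theorem hasDerivAt_apply_add_mul_I {H : ℂ → ℂ} {z : ℂ} {τ : ℝ}
    (h : DifferentiableAt ℂ H (z + τ * I)) :
    HasDerivAt (fun t : ℝ => H (z + t * I)) (deriv H (z + τ * I) * I) τ := by
  have hline : HasDerivAt (fun s : ℂ => z + s * I) I τ := by
    simpa using ((hasDerivAt_id (τ : ℂ)).mul_const I).const_add z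
  exact (h.hasDerivAt.comp (τ : ℂ) hline).comp_ofReal

theorem le_ciSup_Icc_of_continuousOn {a b t : ℝ} {h : ℝ → ℝ} (hh : ContinuousOn h (Icc a b))
    (ht : t ∈ Icc a b) : h t ≤ ⨆ s : Icc a b, h s :=
  le_ciSup (f := fun s : Icc a b => h s)
    (by rw [← image_eq_range]; exact isCompact_Icc.bddAbove_image hh) ⟨t, ht⟩

theorem one_sub_rpow_neg_re_le_norm_one_sub_mul_cpow {n : ℕ} (hn : 0 < n) {a : ℂ} (ha : ‖a‖ ≤ 1)
    (s : ℂ) : 1 - (n : ℝ) ^ (-s.re) ≤ ‖1 - a * (n : ℂ) ^ (-s)‖ := by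
  have hterm : ‖a * (n : ℂ) ^ (-s)‖ ≤ (n : ℝ) ^ (-s.re) := by
    rw [norm_mul, norm_natCast_cpow_of_pos hn, neg_re]
    exact mul_le_of_le_one_left (by positivity) ha
  calc 1 - (n : ℝ) ^ (-s.re) ≤ ‖(1 : ℂ)‖ - ‖a * (n : ℂ) ^ (-s)‖ := by rw [norm_one]; linarith
    _ ≤ ‖1 - a * (n : ℂ) ^ (-s)‖ := norm_sub_norm_le _ _

theorem one_sub_mul_cpow_ne_zero {n : ℕ} (hn : 1 < n) {a : ℂ} (ha : ‖a‖ ≤ 1) {s : ℂ}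
    (hs : 0 < s.re) : 1 - a * (n : ℂ) ^ (-s) ≠ 0 := by
  have hlt : (n : ℝ) ^ (-s.re) < 1 :=
    Real.rpow_lt_one_of_one_lt_of_neg (by exact_mod_cast hn) (by linarith)
  refine norm_pos_iff.mp ?_
  linarith [one_sub_rpow_neg_re_le_norm_one_sub_mul_cpow (zero_lt_one.trans hn) ha s]

noncomputable def eulerProduct (g : ℕ → ℂ) (P : Finset ℕ) (s : ℂ) : ℂ :=
  ∏ p ∈ P, (1 - g p * (p : ℂ) ^ (-s))⁻¹

section eulerProduct

variable {g : ℕ → ℂ} {P : Finset ℕ}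

theorem eulerProduct_ne_zero (hP : ∀ p ∈ P, 1 < p ∧ ‖g p‖ ≤ 1) {s : ℂ} (hs : 0 < s.re) :
    eulerProduct g P s ≠ 0 :=
  Finset.prod_ne_zero_iff.mpr fun p hp =>
    inv_ne_zero (one_sub_mul_cpow_ne_zero (hP p hp).1 (hP p hp).2 hs)

theorem differentiableOn_eulerProduct (hP : ∀ p ∈ P, 1 < p ∧ ‖g p‖ ≤ 1) :
    DifferentiableOn ℂ (eulerProduct g P) {s | 0 < s.re} := by
  refine DifferentiableOn.fun_finsetProd fun p hp => DifferentiableOn.inv ?_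
    fun s hs => one_sub_mul_cpow_ne_zero (hP p hp).1 (hP p hp).2 hs
  refine (Differentiable.const_sub (Differentiable.const_mul ?_ _) _).differentiableOn
  exact differentiable_neg.const_cpow
    (Or.inl (Nat.cast_ne_zero.mpr (zero_lt_one.trans (hP p hp).1).ne'))

theorem norm_eulerProduct (s : ℂ) :
    ‖eulerProduct g P s‖ = ∏ p ∈ P, ‖1 - g p * (p : ℂ) ^ (-s)‖⁻¹ := by
  simp only [eulerProduct, norm_prod, norm_inv]

end eulerProduct

theorem euler_product_integral_bound_variant_general
    (β r y : ℝ) (hβ : 0 < β) (hr : 0 < r)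
    (g : ℕ → ℂ) (hg : ∀ p : ℕ, p.Prime → ‖g p‖ ≤ 1)
    (G Gstar : ℂ → ℂ)
    (hG : G = fun s => ∏ p ∈ primesUpTo y, (1 - g p * (p : ℂ) ^ (-s))⁻¹)
    (hGstar : Gstar = fun s =>
      ∏ p ∈ primesUpTo (Real.sqrt y), (1 - g p * (p : ℂ) ^ (-s))⁻¹)
    (F : ℂ → ℂ)
    (hF : IntervalIntegrable (fun τ : ℝ => F ((β : ℂ) + (τ : ℂ) * Complex.I)) volume 0 r)
    (Mstar : ℝ)
    (hMstar : Mstar = ⨆ t : Set.Icc (0 : ℝ) r,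
      (‖∫ τ in (t : ℝ)..r, F ((β : ℂ) + (τ : ℂ) * Complex.I)‖ *
        ∏ p ∈ (primesUpTo y).filter (fun (p : ℕ) => Real.sqrt y < (p : ℝ)),
          ‖1 - g p * (p : ℂ) ^ (-((β : ℂ) + ((t : ℝ) : ℂ) * Complex.I))‖⁻¹)) :
    ‖∫ τ in (0 : ℝ)..r,
        G ((β : ℂ) + (τ : ℂ) * Complex.I) * F ((β : ℂ) + (τ : ℂ) * Complex.I)‖ ≤
      Mstar * (‖Gstar (β : ℂ)‖ +
        Real.sqrt
          ((∫ τ in (0 : ℝ)..r,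
              ‖deriv G ((β : ℂ) + (τ : ℂ) * Complex.I) /
                G ((β : ℂ) + (τ : ℂ) * Complex.I)‖ ^ 2) *
            (∫ τ in (0 : ℝ)..r, ‖Gstar ((β : ℂ) + (τ : ℂ) * Complex.I)‖ ^ 2))) := by
  have hprimes : ∀ z : ℝ, ∀ p ∈ primesUpTo z, 1 < p ∧ ‖g p‖ ≤ 1 := fun z p hp =>
    ⟨(Finset.mem_filter.mp hp).2.one_lt, hg p (Finset.mem_filter.mp hp).2⟩
  set Q := (primesUpTo y).filter fun p : ℕ => Real.sqrt y < (p : ℝ)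
  have hG' : G = eulerProduct g (primesUpTo y) := hG
  have hGstar' : Gstar = eulerProduct g (primesUpTo (Real.sqrt y)) := hGstar
  have hsplit : ∀ s, G s = Gstar s * eulerProduct g Q s := fun s => by
    rw [hG', hGstar', ← primesUpTo_filter_not_lt_sqrt, mul_comm]
    exact (Finset.prod_filter_mul_prod_filter_not _ _ _).symm
  have hline : ∀ τ : ℝ, (β : ℂ) + τ * I ∈ {s : ℂ | 0 < s.re} := fun _ => by simpa using hβ
  have along_line : ∀ {H : ℂ → ℂ}, ContinuousOn H {s | 0 < s.re} →
      Continuous fun τ : ℝ => H ((β : ℂ) + τ * I) := fun hH =>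
    hH.comp_continuous (by fun_prop) hline
  have hGd : DifferentiableOn ℂ G {s | 0 < s.re} := hG' ▸ differentiableOn_eulerProduct (hprimes y)
  have hhalf : IsOpen {s : ℂ | 0 < s.re} := isOpen_lt continuous_const continuous_re
  have hM : ∀ t ∈ Icc 0 r, ‖∫ τ in t..r, F ((β : ℂ) + τ * I)‖ *
      ‖eulerProduct g Q ((β : ℂ) + t * I)‖ ≤ Mstar := fun t ht => by
    have hQ : ∀ p ∈ Q, 1 < p ∧ ‖g p‖ ≤ 1 := fun p hp => hprimes y p (Finset.mem_filter.mp hp).1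
    simp_rw [hMstar, ← norm_eulerProduct]
    exact le_ciSup_Icc_of_continuousOn ((hF.continuousOn_integral_left hr.le).norm.mul
      (along_line (differentiableOn_eulerProduct hQ).continuousOn).norm.continuousOn) ht
  have key := norm_integral_mul_le_of_eq_mul hr.le
    (fun τ => hasDerivAt_apply_add_mul_I (hGd.differentiableAt (hhalf.mem_nhds (hline τ))))
    ((along_line (hGd.analyticOnNhd hhalf).deriv.continuousOn).mul continuous_const)
    (fun τ => hG' ▸ eulerProduct_ne_zero (hprimes y) (hline τ)) (fun τ => hsplit _)
    (along_line (hGstar' ▸ differentiableOn_eulerProduct (hprimes _)).continuousOn) hF hM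
  simpa [norm_div, norm_mul] using key

/-- Lemma 2: a variant of the Fubini/Cauchy–Schwarz bound for integrals of an Euler
product `G(s) = ∏_{p ≤ y} (1 - g(p)p^{-s})⁻¹` against an integrable `F` along the
vertical segment `[β, β + ir]`, where the factors with `√y < p ≤ y` are absorbed
into the sup term `M*` and `G*` keeps only the primes `p ≤ √y`. -/
theorem euler_product_integral_bound_variant
    (β r y : ℝ) (hβ : 0 < β) (hr : 0 < r) (hy : 0 ≤ y)
    (g : ℕ → ℂ) (hg : ∀ p : ℕ, p.Prime → ‖g p‖ ≤ 1)
    (G Gstar : ℂ → ℂ)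
    (hG : G = fun s => ∏ p ∈ primesUpTo y, (1 - g p * (p : ℂ) ^ (-s))⁻¹)
    (hGstar : Gstar = fun s =>
      ∏ p ∈ primesUpTo (Real.sqrt y), (1 - g p * (p : ℂ) ^ (-s))⁻¹)
    (F : ℂ → ℂ)
    (hF : IntervalIntegrable (fun τ : ℝ => F ((β : ℂ) + (τ : ℂ) * Complex.I)) volume 0 r)
    (Mstar : ℝ)
    (hMstar : Mstar = ⨆ t : Set.Icc (0 : ℝ) r,
      (‖∫ τ in (t : ℝ)..r, F ((β : ℂ) + (τ : ℂ) * Complex.I)‖ *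
        ∏ p ∈ (primesUpTo y).filter (fun (p : ℕ) => Real.sqrt y < (p : ℝ)),
          ‖1 - g p * (p : ℂ) ^ (-((β : ℂ) + ((t : ℝ) : ℂ) * Complex.I))‖⁻¹)) :
    ‖∫ τ in (0 : ℝ)..r,
        G ((β : ℂ) + (τ : ℂ) * Complex.I) * F ((β : ℂ) + (τ : ℂ) * Complex.I)‖ ≤
      Mstar * (‖Gstar (β : ℂ)‖ +
        Real.sqrt
          ((∫ τ in (0 : ℝ)..r,
              ‖deriv G ((β : ℂ) + (τ : ℂ) * Complex.I) /
                G ((β : ℂ) + (τ : ℂ) * Complex.I)‖ ^ 2) *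
            (∫ τ in (0 : ℝ)..r, ‖Gstar ((β : ℂ) + (τ : ℂ) * Complex.I)‖ ^ 2))) :=
  euler_product_integral_bound_variant_general β r y hβ hr g hg G Gstar hG hGstar F hF Mstar hMstar
end

section
/- Let y ≥ 2, let q ≥ 1, let 0 < β ≤ 1 and let t be real. Then |L(β+it, χ₀; y)| ≤ L(β, χ₀; y) · exp( − ∑_{p ≤ y prime, p ∤ q} (1 − cos(t·log p))/p ). -/
open Complex

/-- The truncated Euler product `L(s,χ;y) = ∏_{p ≤ y} (1 - χ(p) p^{-s})⁻¹`. -/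
noncomputable def LSmooth {q : ℕ} (χ : DirichletCharacter ℂ q) (y : ℝ) (s : ℂ) : ℂ :=
  ∏ p ∈ primesUpTo y, (1 - χ (p : ZMod q) * (p : ℂ) ^ (-s))⁻¹

/-! For `‖z‖ < 1`, compare the real parts of `-log (1 - z) = ∑ zⁿ/n` termwise with
`-log (1 - ‖z‖) = ∑ ‖z‖ⁿ/n`, keeping only the gap `‖z‖ - Re z` of the first term: this gives
`‖(1 - z)⁻¹‖ ≤ (1 - ‖z‖)⁻¹ exp (-(‖z‖ - Re z))`. For `z = p^{-β-it}` the gap is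
`p^{-β} (1 - cos (t log p)) ≥ (1 - cos (t log p))/p` as `β ≤ 1`, and `(1 - ‖z‖)⁻¹` is the Euler
factor of `L(β, χ₀; y)` at `p`. The primes dividing `q` contribute `1` to both products. -/

lemma hasSum_re_pow_div_natCast {z : ℂ} (hz : ‖z‖ < 1) :
    HasSum (fun n : ℕ ↦ (z ^ n / n).re) (-Real.log ‖1 - z‖) := by
  simpa [Complex.log_re] using Complex.hasSum_re (Complex.hasSum_taylorSeries_neg_log hz)

lemma norm_inv_one_sub_le {z : ℂ} (hz : ‖z‖ < 1) :
    ‖(1 - z)⁻¹‖ ≤ (1 - ‖z‖)⁻¹ * Real.exp (-(‖z‖ - z.re)) := by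
  have hz' : ‖(‖z‖ : ℂ)‖ < 1 := by simpa using hz
  have hpos : 0 < 1 - ‖z‖ := by linarith
  have hnorm : ‖1 - (‖z‖ : ℂ)‖ = 1 - ‖z‖ := by
    rw [← ofReal_one, ← ofReal_sub, norm_real, Real.norm_of_nonneg hpos.le]
  have hne : 1 - z ≠ 0 := fun h ↦ by
    rw [← eq_of_sub_eq_zero h, norm_one] at hz; exact lt_irrefl _ hz
  have hterm : ∀ n : ℕ, (z ^ n / n).re ≤
      (((‖z‖ : ℂ) ^ n / n).re - if n = 1 then ‖z‖ - z.re else 0) := by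
    intro n
    split_ifs with h
    · subst h; simp
    · have : (‖z‖ : ℂ) ^ n / n = (‖z ^ n / n‖ : ℂ) := by simp
      rw [sub_zero, this, ofReal_re]
      exact re_le_norm _
  have hlog : -Real.log ‖1 - z‖ ≤ -Real.log (1 - ‖z‖) - (‖z‖ - z.re) := by
    refine hasSum_le hterm (hasSum_re_pow_div_natCast hz) ?_
    simpa [hnorm] using (hasSum_re_pow_div_natCast hz').sub (hasSum_ite_eq 1 (‖z‖ - z.re))
  have := Real.exp_le_exp.mpr hlog
  rwa [Real.exp_sub, Real.exp_neg, Real.exp_neg, Real.exp_log (norm_pos_iff.mpr hne),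
    Real.exp_log hpos, div_eq_mul_inv, ← Real.exp_neg, ← norm_inv] at this

lemma norm_sub_re_natCast_cpow {n : ℕ} (hn : 0 < n) (s : ℂ) :
    ‖(n : ℂ) ^ s‖ - ((n : ℂ) ^ s).re = (n : ℝ) ^ s.re * (1 - Real.cos (s.im * Real.log n)) := by
  have hn' : (0 : ℝ) < n := by exact_mod_cast hn
  rw [norm_natCast_cpow_of_pos hn, cpow_def_of_ne_zero (by exact_mod_cast hn.ne'), exp_re,
    ← natCast_log, re_ofReal_mul, im_ofReal_mul, Real.rpow_def_of_pos hn']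
  ring_nf

lemma norm_inv_one_sub_prime_cpow_le {p : ℕ} (hp : p.Prime) {β : ℝ} (t : ℝ) (hβ0 : 0 < β)
    (hβ1 : β ≤ 1) :
    ‖(1 - (p : ℂ) ^ (-((β : ℂ) + t * I)))⁻¹‖ ≤
      ‖(1 - (p : ℂ) ^ (-(β : ℂ)))⁻¹‖ * Real.exp (-((1 - Real.cos (t * Real.log p)) / p)) := by
  have hp1 : (1 : ℝ) < p := by exact_mod_cast hp.one_lt
  set z := (p : ℂ) ^ (-((β : ℂ) + t * I))
  have hz : ‖z‖ = (p : ℝ) ^ (-β) := by simp [z, norm_natCast_cpow_of_pos hp.pos]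
  have hz1 : ‖z‖ < 1 := hz ▸ Real.rpow_lt_one_of_one_lt_of_neg hp1 (by linarith)
  have hreal : (p : ℂ) ^ (-(β : ℂ)) = (‖z‖ : ℂ) := by
    rw [hz, ← ofReal_neg, ofReal_cpow (by positivity), ofReal_natCast]
  have hgap : ‖z‖ - z.re = (p : ℝ) ^ (-β) * (1 - Real.cos (t * Real.log p)) := by
    simp [z, norm_sub_re_natCast_cpow hp.pos, neg_mul, Real.cos_neg]
  have hpβ : (p : ℝ)⁻¹ ≤ (p : ℝ) ^ (-β) := by
    rw [← Real.rpow_neg_one]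
    exact Real.rpow_le_rpow_of_exponent_le hp1.le (by linarith)
  have hcos : 0 ≤ 1 - Real.cos (t * Real.log p) := sub_nonneg.mpr (Real.cos_le_one _)
  rw [hreal, ← ofReal_one, ← ofReal_sub, ← ofReal_inv, norm_real,
    Real.norm_of_nonneg (inv_nonneg.mpr (by linarith))]
  refine (norm_inv_one_sub_le hz1).trans ?_
  gcongr
  rw [hgap, div_eq_inv_mul]
  gcongr

lemma LSmooth_one_eq_prod (q : ℕ) (y : ℝ) (s : ℂ) :
    LSmooth (1 : DirichletCharacter ℂ q) y s =
      ∏ p ∈ (primesUpTo y).filter (fun p ↦ ¬ p ∣ q), (1 - (p : ℂ) ^ (-s))⁻¹ := by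
  rw [Finset.prod_filter, LSmooth]
  refine Finset.prod_congr rfl fun p hp ↦ ?_
  have hp : p.Prime := (Finset.mem_filter.mp hp).2
  split_ifs with hpq
  · rw [MulChar.map_nonunit _ (by rwa [ZMod.isUnit_prime_iff_not_dvd hp, not_not]), zero_mul,
      sub_zero, inv_one]
  · rw [MulChar.one_apply ((ZMod.isUnit_prime_iff_not_dvd hp).mpr hpq), one_mul]

theorem LSmooth_principal_bound_general
    (y : ℝ) (q : ℕ) (β t : ℝ) (hβ0 : 0 < β) (hβ1 : β ≤ 1) :
    ‖LSmooth (1 : DirichletCharacter ℂ q) y ((β : ℂ) + (t : ℂ) * Complex.I)‖ ≤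
      ‖LSmooth (1 : DirichletCharacter ℂ q) y ((β : ℂ))‖ *
        Real.exp
          (-∑ p ∈ (primesUpTo y).filter (fun (p : ℕ) => ¬ p ∣ q),
            (1 - Real.cos (t * Real.log p)) / (p : ℝ)) := by
  rw [LSmooth_one_eq_prod, LSmooth_one_eq_prod, norm_prod, norm_prod, ← Finset.sum_neg_distrib,
    Real.exp_sum, ← Finset.prod_mul_distrib]
  refine Finset.prod_le_prod (fun _ _ ↦ norm_nonneg _) fun p hp ↦ ?_
  have hp : p.Prime := (Finset.mem_filter.mp (Finset.mem_filter.mp hp).1).2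
  exact norm_inv_one_sub_prime_cpow_le hp t hβ0 hβ1

/-- For the principal character `χ₀ (mod q)` and `0 < β ≤ 1`:
`|L(β+it,χ₀;y)| ≤ L(β,χ₀;y) · exp(-∑_{p ≤ y, p ∤ q} (1 - cos(t log p))/p)`. -/
theorem LSmooth_principal_bound
    (y : ℝ) (hy : 2 ≤ y) (q : ℕ) (hq : 1 ≤ q) (β t : ℝ) (hβ0 : 0 < β) (hβ1 : β ≤ 1) :
    ‖LSmooth (1 : DirichletCharacter ℂ q) y ((β : ℂ) + (t : ℂ) * Complex.I)‖ ≤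
      ‖LSmooth (1 : DirichletCharacter ℂ q) y ((β : ℂ))‖ *
        Real.exp
          (-∑ p ∈ (primesUpTo y).filter (fun (p : ℕ) => ¬ p ∣ q),
            (1 - Real.cos (t * Real.log p)) / (p : ℝ)) :=
  LSmooth_principal_bound_general y q β t hβ0 hβ1
end

section
/- There exists an absolute constant C such that the following holds: for every measurable function Φ : [0,∞) → [0,1] supported on [0,2], every x ≥ 2, every real β with 3/4 ≤ β ≤ 1, and all real t, T with 0 ≤ t ≤ T ≤ (log x)^{1/4}: | ∫_t^T x^{ir} Φ̆(β + ir) dr | ≤ C / log x. -/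
/-!
Unfolding `Φ̆` and exchanging the order of integration turns the integral into
`∫₀² Φ(v) v^{β-1} ∫_t^T e^{i r log(xv)} dr dv`. The inner integral is at most `T - t ≤ (log x)^{1/4}`
in general, and at most `2 / log(xv) < 4 / log x` once `v > x^{-1/2}`. The remaining range
`v ≤ x^{-1/2}` carries weight `∫ v^{β-1} dv ≪ x^{-3/8}`, which beats any power of `log x`.
-/

open Complex MeasureTheory

theorem norm_integral_exp_mul_I_le_sub {t T : ℝ} (h : t ≤ T) (a : ℝ) :
    ‖∫ r in t..T, exp (r * a * I)‖ ≤ T - t := by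
  simpa [abs_of_nonneg (sub_nonneg.2 h)] using
    intervalIntegral.norm_integral_le_of_norm_le_const (a := t) (b := T) (C := 1)
      fun r _ ↦ by rw [← ofReal_mul, norm_exp_ofReal_mul_I]

theorem norm_integral_exp_mul_I_le_two_div {a : ℝ} (ha : a ≠ 0) (t T : ℝ) :
    ‖∫ r in t..T, exp (r * a * I)‖ ≤ 2 / |a| := by
  have haI : (a : ℂ) * I ≠ 0 := mul_ne_zero (ofReal_ne_zero.2 ha) I_ne_zero
  have hexp : ∀ r : ℝ, ‖exp (a * I * r)‖ = 1 := fun r ↦ by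
    rw [mul_right_comm, ← ofReal_mul, norm_exp_ofReal_mul_I]
  have hswap : ∀ r : ℝ, (r : ℂ) * a * I = a * I * r := fun r ↦ by ring
  simp_rw [hswap, integral_exp_mul_complex haI, norm_div, norm_mul, norm_I, norm_real,
    Real.norm_eq_abs, mul_one]
  gcongr
  exact (norm_sub_le _ _).trans_eq (by rw [hexp, hexp]; norm_num)

theorem norm_integral_exp_log_mul_le {x v : ℝ} (hx : 1 < x) (hv : x ^ (-(1 / 2) : ℝ) < v)
    (t T : ℝ) : ‖∫ r in t..T, exp (r * Real.log (x * v) * I)‖ ≤ 4 / Real.log x := by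
  have hx0 : 0 < x := zero_lt_one.trans hx
  have hv0 : 0 < v := (Real.rpow_pos_of_pos hx0 _).trans hv
  have hlog : Real.log x / 2 < Real.log (x * v) := by
    have := Real.log_lt_log (Real.rpow_pos_of_pos hx0 _) hv
    rw [Real.log_rpow hx0] at this
    rw [Real.log_mul hx0.ne' hv0.ne']
    linarith
  have hL : 0 < Real.log x := Real.log_pos hx
  calc _ ≤ 2 / |Real.log (x * v)| := norm_integral_exp_mul_I_le_two_div (by linarith) _ _
    _ ≤ 2 / (Real.log x / 2) := by
        gcongr
        exact hlog.le.trans (le_abs_self _)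
    _ = 4 / Real.log x := by ring

section Fubini

variable {μ : Measure ℝ} {g : ℝ → ℂ} {θ : ℝ → ℝ}

theorem integrable_prod_mul_exp_mul_I (hg : Integrable g μ) (hθ : Measurable θ) (t T : ℝ) :
    Integrable (Function.uncurry fun (r : ℝ) v ↦ g v * exp ((r : ℂ) * θ v * I))
      ((volume.restrict (Set.uIoc t T)).prod μ) := by
  have : IsFiniteMeasure (volume.restrict (Set.uIoc t T)) :=
    isFiniteMeasure_restrict.2 (by simp [Set.uIoc])
  have hexp : Measurable fun p : ℝ × ℝ ↦ exp (p.1 * θ p.2 * I) := by fun_prop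
  refine ((integrable_const (1 : ℂ)).mul_prod hg).mono
    ((hg.1.comp_snd (μ := volume.restrict (Set.uIoc t T))).mul hexp.aestronglyMeasurable)
    (.of_forall fun ⟨r, v⟩ ↦ ?_)
  simp only [Function.uncurry_apply_pair, norm_mul, one_mul, ← ofReal_mul, norm_exp_ofReal_mul_I,
    mul_one, le_refl]

variable [SFinite μ]

theorem intervalIntegral_integral_mul_exp_mul_I_swap (hg : Integrable g μ) (hθ : Measurable θ)
    (t T : ℝ) :
    ∫ r in t..T, ∫ v, g v * exp (r * θ v * I) ∂μ =
      ∫ v, g v * (∫ r in t..T, exp (r * θ v * I)) ∂μ := by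
  rw [intervalIntegral_integral_swap (integrable_prod_mul_exp_mul_I hg hθ t T)]
  simp_rw [intervalIntegral.integral_const_mul]

theorem integrable_mul_intervalIntegral_exp_mul_I (hg : Integrable g μ) (hθ : Measurable θ)
    (t T : ℝ) : Integrable (fun v ↦ g v * ∫ r in t..T, exp (r * θ v * I)) μ := by
  convert ((integrable_prod_mul_exp_mul_I hg hθ t T).integral_prod_right).smul
    (if t ≤ T then (1 : ℝ) else -1) using 2 with v
  simp [intervalIntegral.intervalIntegral_eq_integral_uIoc, ← integral_const_mul]

end Fubini

theorem cpow_mul_I_mul_mellin {x : ℝ} (hx : 0 < x) (f : ℝ → ℂ) (β r : ℝ) :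
    (x : ℂ) ^ ((r : ℂ) * I) * mellin f (β + r * I) =
      ∫ v in Set.Ioi 0, ((v ^ (β - 1) : ℝ) : ℂ) * f v * exp (r * Real.log (x * v) * I) := by
  rw [mellin, ← integral_const_mul]
  refine setIntegral_congr_fun measurableSet_Ioi fun v (hv : 0 < v) ↦ ?_
  have hxv : 0 < x * v := mul_pos hx hv
  have hphase : (x : ℂ) ^ ((r : ℂ) * I) * (v : ℂ) ^ ((r : ℂ) * I) =
      exp (r * Real.log (x * v) * I) := by
    rw [← mul_cpow_ofReal_nonneg hx.le hv.le, cpow_def_of_ne_zero (by exact_mod_cast hxv.ne'),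
      ofReal_log hxv.le]
    push_cast
    ring_nf
  rw [smul_eq_mul, ofReal_cpow hv.le, ← hphase,
    show (β : ℂ) + r * I - 1 = (β - 1 : ℝ) + r * I by push_cast; ring,
    cpow_add _ _ (ofReal_ne_zero.2 hv.ne')]
  ring

theorem integrableOn_Ioi_of_norm_le_rpow {g : ℝ → ℂ} {β b : ℝ} (hβ : 0 < β)
    (hg : AEStronglyMeasurable g) (hgβ : ∀ v ∈ Set.Ioc 0 b, ‖g v‖ ≤ v ^ (β - 1))
    (hgb : ∀ v, b < v → g v = 0) : IntegrableOn g (Set.Ioi 0) :=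
  IntegrableOn.of_forall_sdiff_eq_zero (s := Set.Ioc 0 b)
    (((intervalIntegral.intervalIntegrable_rpow' (by linarith)).1).mono' hg.restrict
      (ae_restrict_of_forall_mem measurableSet_Ioc hgβ))
    measurableSet_Ioi fun v hv ↦ hgb v (not_le.1 fun h ↦ hv.2 ⟨hv.1, h⟩)

theorem intervalIntegral_cpow_mul_I_mul_mellin {f : ℝ → ℂ} {x β b : ℝ} (hx : 0 < x)
    (hf : IntegrableOn (fun v ↦ ((v ^ (β - 1) : ℝ) : ℂ) * f v) (Set.Ioi 0))
    (hb : 0 ≤ b) (hfb : ∀ v, b < v → f v = 0) (t T : ℝ) :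
    ∫ r in t..T, (x : ℂ) ^ ((r : ℂ) * I) * mellin f (β + r * I) =
      ∫ v in 0..b, ((v ^ (β - 1) : ℝ) : ℂ) * f v * ∫ r in t..T, exp (r * Real.log (x * v) * I) := by
  simp_rw [cpow_mul_I_mul_mellin hx]
  rw [intervalIntegral_integral_mul_exp_mul_I_swap hf (by fun_prop),
    intervalIntegral.integral_of_le hb,
    setIntegral_eq_of_subset_of_forall_sdiff_eq_zero measurableSet_Ioi Set.Ioc_subset_Ioi_self]
  intro v hv
  rw [hfb v (not_le.1 fun h ↦ hv.2 ⟨hv.1, h⟩), mul_zero, zero_mul]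

theorem norm_intervalIntegral_mul_le_of_norm_le_rpow {g K : ℝ → ℂ} {β a c C : ℝ} (hβ : 0 < β)
    (ha : 0 ≤ a) (hac : a ≤ c) (hg : ∀ v ∈ Set.Ioc a c, ‖g v‖ ≤ v ^ (β - 1))
    (hK : ∀ v ∈ Set.Ioc a c, ‖K v‖ ≤ C) :
    ‖∫ v in a..c, g v * K v‖ ≤ C * (c ^ β - a ^ β) / β := by
  have hint : IntervalIntegrable (fun v : ℝ ↦ v ^ (β - 1) * C) volume a c :=
    (intervalIntegral.intervalIntegrable_rpow' (by linarith)).mul_const C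
  calc ‖∫ v in a..c, g v * K v‖ ≤ ∫ v in a..c, v ^ (β - 1) * C :=
        intervalIntegral.norm_integral_le_of_norm_le hac (.of_forall fun v hv ↦ by
          rw [norm_mul]
          exact mul_le_mul (hg v hv) (hK v hv) (norm_nonneg _)
            (Real.rpow_nonneg (ha.trans hv.1.le) _)) hint
    _ = C * (c ^ β - a ^ β) / β := by
        rw [intervalIntegral.integral_mul_const, integral_rpow (.inl (by linarith)),
          sub_add_cancel]
        ring

theorem norm_intervalIntegral_mul_le_of_split {g K : ℝ → ℂ} {β v₀ b A B : ℝ} (hβ : 0 < β)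
    (hv₀ : 0 ≤ v₀) (hv₀b : v₀ ≤ b) (hgK : IntervalIntegrable (fun v ↦ g v * K v) volume 0 b)
    (hg : ∀ v ∈ Set.Ioc 0 b, ‖g v‖ ≤ v ^ (β - 1))
    (hA : ∀ v ∈ Set.Ioc 0 v₀, ‖K v‖ ≤ A) (hB : ∀ v ∈ Set.Ioc v₀ b, ‖K v‖ ≤ B) (hB0 : 0 ≤ B) :
    ‖∫ v in 0..b, g v * K v‖ ≤ (v₀ ^ β * A + b ^ β * B) / β := by
  have hv₀_mem : v₀ ∈ Set.uIcc 0 b := Set.mem_uIcc_of_le hv₀ hv₀b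
  rw [← intervalIntegral.integral_add_adjacent_intervals
    (hgK.mono_set (Set.uIcc_subset_uIcc_left hv₀_mem))
    (hgK.mono_set (Set.uIcc_subset_uIcc_right hv₀_mem))]
  have h₁ := norm_intervalIntegral_mul_le_of_norm_le_rpow hβ le_rfl hv₀
    (fun v hv ↦ hg v ⟨hv.1, hv.2.trans hv₀b⟩) hA
  have h₂ := norm_intervalIntegral_mul_le_of_norm_le_rpow hβ hv₀ hv₀b
    (fun v hv ↦ hg v ⟨hv₀.trans_lt hv.1, hv.2⟩) hB
  rw [Real.zero_rpow hβ.ne'] at h₁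
  have hv₀B : 0 ≤ v₀ ^ β * B / β := by have := Real.rpow_nonneg hv₀ β; positivity
  calc _ ≤ _ := norm_add_le _ _
    _ ≤ A * (v₀ ^ β - 0) / β + B * (b ^ β - v₀ ^ β) / β := add_le_add h₁ h₂
    _ = (v₀ ^ β * A + b ^ β * B) / β - v₀ ^ β * B / β := by ring
    _ ≤ (v₀ ^ β * A + b ^ β * B) / β := sub_le_self _ hv₀B

theorem log_rpow_le_mul_rpow {x p ε : ℝ} (hx : 1 ≤ x) (hp : 0 < p) (hε : 0 < ε) :
    Real.log x ^ p ≤ (p / ε) ^ p * x ^ ε := by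
  have hx0 : 0 ≤ x := zero_le_one.trans hx
  have hlog : Real.log x ≤ p / ε * x ^ (ε / p) := by
    refine (Real.log_le_rpow_div hx0 (div_pos hε hp)).trans_eq ?_
    field_simp
  calc Real.log x ^ p ≤ (p / ε * x ^ (ε / p)) ^ p :=
        Real.rpow_le_rpow (Real.log_nonneg hx) hlog hp.le
    _ = (p / ε) ^ p * x ^ ε := by
        rw [Real.mul_rpow (by positivity) (by positivity), ← Real.rpow_mul hx0,
          div_mul_cancel₀ _ hp.ne']

theorem split_bound_le_div_log {x β : ℝ} (hx : 1 < x) (hβ : 3 / 4 ≤ β) (hβ1 : β ≤ 1) :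
    ((x ^ (-(1 / 2) : ℝ)) ^ β * Real.log x ^ ((1 : ℝ) / 4) + 2 ^ β * (4 / Real.log x)) / β ≤
      4 / 3 * ((10 / 3) ^ (5 / 4 : ℝ) + 8) / Real.log x := by
  have hx0 : 0 < x := zero_lt_one.trans hx
  set L := Real.log x
  have hL : 0 < L := Real.log_pos hx
  have hsmall : (x ^ (-(1 / 2) : ℝ)) ^ β ≤ (x ^ (3 / 8 : ℝ))⁻¹ := by
    rw [← Real.rpow_mul hx0.le, ← Real.rpow_neg hx0.le]
    exact Real.rpow_le_rpow_of_exponent_le hx.le (by linarith)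
  have hlog : L ^ ((1 : ℝ) / 4) * L ≤ (10 / 3) ^ (5 / 4 : ℝ) * x ^ (3 / 8 : ℝ) := by
    rw [← Real.rpow_add_one hL.ne']
    convert log_rpow_le_mul_rpow hx.le (p := 5 / 4) (ε := 3 / 8) (by norm_num) (by norm_num)
      using 3 <;> norm_num
  have hfirst : (x ^ (-(1 / 2) : ℝ)) ^ β * L ^ ((1 : ℝ) / 4) ≤ (10 / 3) ^ (5 / 4 : ℝ) / L := by
    calc _ ≤ (x ^ (3 / 8 : ℝ))⁻¹ * L ^ ((1 : ℝ) / 4) := by gcongr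
      _ ≤ (10 / 3) ^ (5 / 4 : ℝ) / L := by
          rw [le_div_iff₀ hL, mul_assoc, inv_mul_le_iff₀ (by positivity)]
          linarith
  have htwo : (2 : ℝ) ^ β ≤ 2 := by
    simpa using Real.rpow_le_rpow_of_exponent_le one_le_two hβ1
  have hβinv : β⁻¹ ≤ 4 / 3 := by
    rw [inv_le_comm₀ (by linarith) (by norm_num)]
    linarith
  calc _ ≤ ((10 / 3) ^ (5 / 4 : ℝ) / L + 2 * (4 / L)) / β := by gcongr
    _ = ((10 / 3) ^ (5 / 4 : ℝ) + 8) / L * β⁻¹ := by ring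
    _ ≤ ((10 / 3) ^ (5 / 4 : ℝ) + 8) / L * (4 / 3) := by gcongr
    _ = _ := by ring

/-- Bound for the oscillating integral `∫_t^T x^{ir} Φ̆(β+ir) dr`, where `Φ̆` is the
Mellin transform of a measurable weight `Φ : [0,∞) → [0,1]` supported on `[0,2]`. -/
theorem oscillating_mellin_integral_bound :
    ∃ C : ℝ, ∀ (Φ : ℝ → ℝ),
      Measurable Φ →
      (∀ v, Φ v ∈ Set.Icc (0 : ℝ) 1) →
      (∀ v, v ∉ Set.Icc (0 : ℝ) 2 → Φ v = 0) →
      ∀ (x β t T : ℝ), 2 ≤ x → 3 / 4 ≤ β → β ≤ 1 →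
        0 ≤ t → t ≤ T → T ≤ Real.log x ^ ((1 : ℝ) / 4) →
        ‖∫ r in t..T,
            (x : ℂ) ^ ((r : ℂ) * Complex.I) *
              mellin (fun v : ℝ => (Φ v : ℂ)) ((β : ℂ) + (r : ℂ) * Complex.I)‖ ≤
          C / Real.log x := by
  refine ⟨4 / 3 * ((10 / 3) ^ (5 / 4 : ℝ) + 8),
    fun Φ hΦ hΦ01 hΦ0 x β t T hx hβ hβ1 ht htT hT ↦ ?_⟩
  have hx1 : 1 < x := by linarith
  set g : ℝ → ℂ := fun v ↦ ((v ^ (β - 1) : ℝ) : ℂ) * Φ v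
  have hΦ2 : ∀ v, 2 < v → (Φ v : ℂ) = 0 := fun v hv ↦ by
    rw [hΦ0 v fun h ↦ (not_le.2 hv) h.2, ofReal_zero]
  have hgβ : ∀ v ∈ Set.Ioc 0 2, ‖g v‖ ≤ v ^ (β - 1) := fun v hv ↦ by
    have hvβ := Real.rpow_nonneg hv.1.le (β - 1)
    rw [norm_mul, norm_real, norm_real, Real.norm_of_nonneg hvβ, Real.norm_of_nonneg (hΦ01 v).1]
    exact mul_le_of_le_one_right hvβ (hΦ01 v).2
  have hg : IntegrableOn g (Set.Ioi 0) := integrableOn_Ioi_of_norm_le_rpow (by linarith)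
    (by fun_prop) hgβ fun v hv ↦ by simp only [g, hΦ2 v hv, mul_zero]
  have hgK := integrable_mul_intervalIntegral_exp_mul_I hg
    (by fun_prop : Measurable fun v ↦ Real.log (x * v)) t T
  rw [intervalIntegral_cpow_mul_I_mul_mellin (by linarith) hg two_pos.le hΦ2]
  refine (norm_intervalIntegral_mul_le_of_split (by linarith) (Real.rpow_nonneg (by linarith) _)
    ((Real.rpow_le_one_of_one_le_of_nonpos hx1.le (by norm_num)).trans one_le_two)
    ((intervalIntegrable_iff_integrableOn_Ioc_of_le two_pos.le).2
      (IntegrableOn.mono_set hgK Set.Ioc_subset_Ioi_self)) hgβ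
    (fun v _ ↦ (norm_integral_exp_mul_I_le_sub htT _).trans (by linarith))
    (fun v hv ↦ norm_integral_exp_log_mul_le hx1 hv.1 t T)
    (div_nonneg zero_le_four (Real.log_nonneg hx1.le))).trans
    (split_bound_le_div_log hx1 hβ hβ1)
end

section
/- There exists a constant C such that for all x, y, q with 16 ≤ x and 2 ≤ y ≤ √(log x): Ψ_q(x,y) = (1/π_q(y)!) · ∏_{p ≤ y prime, p ∤ q} (log x / log p) · (1 + E), where π_q(y) := #{p ≤ y : p prime, p ∤ q} and |E| ≤ C·y²/(log x · log y). -/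
/-- `PsiCop x y q` is the number of `y`-smooth integers `1 ≤ n ≤ x` coprime to `q`. -/
noncomputable def PsiCop (x y : ℝ) (q : ℕ) : ℕ :=
  ((Finset.Icc 1 ⌊x⌋₊).filter
    (fun n => (∀ p : ℕ, p ∈ n.primeFactors → (p : ℝ) ≤ y) ∧ Nat.Coprime n q)).card

open Finset Real
open scoped Nat

section PowerSums

variable {R : Type*} [CommRing R]

theorem pow_succ_sub_pow_succ_eq_sum_mul (c d : R) (k : ℕ) :
    c ^ (k + 1) - d ^ (k + 1) = (∑ i ∈ range (k + 1), c ^ i * d ^ (k - i)) * (c - d) := by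
  rw [← geom_sum₂_mul]
  simp

theorem sum_range_pow_mul_pow_self (c : R) (k : ℕ) :
    ∑ i ∈ range (k + 1), c ^ i * c ^ (k - i) = (k + 1) * c ^ k := by
  rw [sum_congr rfl fun i hi => by rw [← pow_add, Nat.add_sub_cancel' (mem_range_succ_iff.mp hi)]]
  simp

variable [LinearOrder R] [IsStrictOrderedRing R]

theorem pow_succ_sub_pow_succ_le {c d : R} (hd : 0 ≤ d) (hdc : d ≤ c) (k : ℕ) :
    c ^ (k + 1) - d ^ (k + 1) ≤ (k + 1) * c ^ k * (c - d) := by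
  have := hd.trans hdc
  rw [pow_succ_sub_pow_succ_eq_sum_mul, ← sum_range_pow_mul_pow_self]
  gcongr

theorem mul_pow_le_pow_succ_sub_pow_succ {c d : R} (hd : 0 ≤ d) (hdc : d ≤ c) (k : ℕ) :
    (k + 1) * d ^ k * (c - d) ≤ c ^ (k + 1) - d ^ (k + 1) := by
  rw [pow_succ_sub_pow_succ_eq_sum_mul, ← sum_range_pow_mul_pow_self]
  gcongr

/-- Riemann-sum lower bound for `∫₀^L t^k dt = L^(k+1)/(k+1)` at mesh `u`. -/
theorem pow_succ_le_mul_sum_pow {L u : R} {k M : ℕ} (hM : M * u ≤ L) (hM' : L < (M + 1) * u) :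
    L ^ (k + 1) ≤ (k + 1) * u * ∑ a ∈ range (M + 1), (L - a * u) ^ k := by
  set G : ℕ → R := fun a => max (L - a * u) 0 ^ (k + 1)
  have hu : 0 < u := by nlinarith
  have hG : ∀ a ∈ range (M + 1), G a - G (a + 1) ≤ (k + 1) * u * (L - a * u) ^ k := by
    intro a ha
    have haM : (a : R) ≤ M := by exact_mod_cast mem_range_succ_iff.mp ha
    set c := L - a * u
    have hc : 0 ≤ c := by nlinarith
    have hd := le_max_left (c - u) 0
    calc G a - G (a + 1) = c ^ (k + 1) - max (c - u) 0 ^ (k + 1) := by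
          simp only [G, c, max_eq_left hc]; push_cast; ring_nf
      _ ≤ (k + 1) * c ^ k * (c - max (c - u) 0) :=
          pow_succ_sub_pow_succ_le (le_max_right _ _) (max_le (by linarith) hc) k
      _ ≤ (k + 1) * c ^ k * u := by gcongr; linarith
      _ = _ := by ring
  have hL : 0 ≤ L := (mul_nonneg M.cast_nonneg hu.le).trans hM
  have hGM : G (M + 1) = 0 := by
    simp only [G]
    rw [max_eq_right (by push_cast; linarith)]
    exact zero_pow k.succ_ne_zero
  calc L ^ (k + 1) = G 0 - G (M + 1) := by simp [G, hGM, hL]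
    _ = ∑ a ∈ range (M + 1), (G a - G (a + 1)) := (sum_range_sub' G (M + 1)).symm
    _ ≤ _ := by rw [mul_sum]; exact sum_le_sum hG

/-- Riemann-sum upper bound for `∫₀^(L+u) t^k dt` at mesh `u`. -/
theorem mul_sum_pow_le_pow_succ {L u : R} {k M : ℕ} (hu : 0 ≤ u) (hM : M * u ≤ L) :
    (k + 1) * u * ∑ a ∈ range (M + 1), (L - a * u) ^ k ≤ (L + u) ^ (k + 1) := by
  set F : ℕ → R := fun a => (L + u - a * u) ^ (k + 1)
  have hF : ∀ a ∈ range (M + 1), (k + 1) * u * (L - a * u) ^ k ≤ F a - F (a + 1) := by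
    intro a ha
    have haM : (a : R) ≤ M := by exact_mod_cast mem_range_succ_iff.mp ha
    calc (k + 1) * u * (L - a * u) ^ k
        = (k + 1) * (L - a * u) ^ k * ((L + u - a * u) - (L - a * u)) := by ring
      _ ≤ (L + u - a * u) ^ (k + 1) - (L - a * u) ^ (k + 1) :=
          mul_pow_le_pow_succ_sub_pow_succ (by nlinarith) (by linarith) k
      _ = F a - F (a + 1) := by simp only [F]; push_cast; ring_nf
  have hFM : 0 ≤ F (M + 1) := by simp only [F]; push_cast; apply pow_nonneg; linarith
  calc (k + 1) * u * ∑ a ∈ range (M + 1), (L - a * u) ^ k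
      ≤ ∑ a ∈ range (M + 1), (F a - F (a + 1)) := by rw [mul_sum]; exact sum_le_sum hF
    _ = F 0 - F (M + 1) := sum_range_sub' F (M + 1)
    _ ≤ F 0 := sub_le_self _ hFM
    _ = (L + u) ^ (k + 1) := by simp [F]

end PowerSums

def factoredCount (s : Finset ℕ) (N : ℕ) : ℕ := #{n ∈ Icc 1 N | n.primeFactors ⊆ s}

theorem factoredCount_empty {N : ℕ} (hN : 1 ≤ N) : factoredCount ∅ N = 1 := by
  rw [factoredCount, card_eq_one]
  refine ⟨1, ?_⟩
  ext n
  simp only [mem_filter, mem_Icc, subset_empty, Nat.primeFactors_eq_empty, mem_singleton]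
  omega

theorem primeFactors_pow_mul_subset_insert {p a m : ℕ} {s : Finset ℕ} (hp : p.Prime)
    (hm : m.primeFactors ⊆ s) : (p ^ a * m).primeFactors ⊆ insert p s := by
  intro t ht
  obtain ⟨htp, htd, hne⟩ := Nat.mem_primeFactors.mp ht
  rcases htp.dvd_mul.mp htd with h | h
  · exact mem_insert.mpr (.inl ((Nat.prime_dvd_prime_iff_eq htp hp).mp (htp.dvd_of_dvd_pow h)))
  · exact mem_insert_of_mem (hm (Nat.mem_primeFactors.mpr ⟨htp, h, right_ne_zero_of_mul hne⟩))

theorem factoredCount_insert {p : ℕ} {s : Finset ℕ} (hp : p.Prime) (hps : p ∉ s) (N : ℕ) :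
    factoredCount (insert p s) N =
      ∑ a ∈ range (Nat.log p N + 1), factoredCount s (N / p ^ a) := by
  simp only [factoredCount]
  rw [← card_sigma]
  refine card_nbij' (fun n => ⟨n.factorization p, n / p ^ n.factorization p⟩)
    (fun t => p ^ t.1 * t.2) ?_ ?_ ?_ ?_
  · intro n hn
    simp only [mem_coe, mem_filter, mem_Icc] at hn
    obtain ⟨⟨hn1, hnN⟩, hns⟩ := hn
    have hn0 : n ≠ 0 := by omega
    simp only [mem_coe, mem_sigma, mem_range, mem_filter, mem_Icc]
    refine ⟨Nat.lt_succ_of_le ((Nat.le_log_iff_pow_le hp.one_lt (by omega)).2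
      ((Nat.ordProj_le p hn0).trans hnN)), ⟨Nat.ordCompl_pos p hn0, Nat.div_le_div_right hnN⟩, ?_⟩
    rwa [← Nat.support_factorization, Nat.factorization_ordCompl, Finsupp.support_erase,
      Nat.support_factorization, ← subset_insert_iff]
  · rintro ⟨a, m⟩ hm
    simp only [mem_coe, mem_sigma, mem_range, mem_filter, mem_Icc] at hm
    obtain ⟨-, ⟨hm1, hmN⟩, hms⟩ := hm
    simp only [mem_coe, mem_filter, mem_Icc]
    refine ⟨⟨Nat.one_le_iff_ne_zero.mpr (mul_ne_zero (pow_ne_zero a hp.ne_zero) (by omega)), ?_⟩,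
      primeFactors_pow_mul_subset_insert hp hms⟩
    rw [mul_comm]
    exact (Nat.le_div_iff_mul_le (pow_pos hp.pos a)).mp hmN
  · intro n _
    exact Nat.ordProj_mul_ordCompl_eq_self n p
  · rintro ⟨a, m⟩ hm
    simp only [mem_coe, mem_sigma, mem_filter, mem_Icc] at hm
    obtain ⟨-, ⟨hm1, -⟩, hms⟩ := hm
    have hpm : ¬ p ∣ m := fun h => hps (hms (Nat.mem_primeFactors.mpr ⟨hp, h, by omega⟩))
    have ha : (p ^ a * m).factorization p = a := by
      rw [Nat.factorization_mul (pow_ne_zero a hp.ne_zero) (by omega), Finsupp.add_apply,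
        Nat.factorization_pow_self hp, Nat.factorization_eq_zero_of_not_dvd hpm, add_zero]
    simp only [ha, Nat.mul_div_cancel_left m (pow_pos hp.pos a)]

theorem natLog_floor_mul_log_le {b : ℕ} (hb : 0 < b) {x : ℝ} (hx : 1 ≤ x) :
    Nat.log b ⌊x⌋₊ * log b ≤ log x := by
  rw [← log_pow, ← Nat.cast_pow]
  refine log_le_log (by positivity) ((Nat.cast_le.mpr ?_).trans (Nat.floor_le (by linarith)))
  exact Nat.pow_log_le_self b (Nat.floor_pos.mpr hx).ne'

theorem log_lt_natLog_floor_add_one_mul_log {b : ℕ} (hb : 1 < b) {x : ℝ} (hx : 0 < x) :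
    log x < (Nat.log b ⌊x⌋₊ + 1) * log b := by
  rw [← Nat.cast_add_one, ← log_pow, ← Nat.cast_pow]
  refine log_lt_log hx ((Nat.lt_floor_add_one x).trans_le ?_)
  exact_mod_cast Nat.lt_pow_succ_log_self hb _

theorem factoredCount_insert_floor {p : ℕ} {s : Finset ℕ} (hp : p.Prime) (hps : p ∉ s) (x : ℝ) :
    factoredCount (insert p s) ⌊x⌋₊ =
      ∑ a ∈ range (Nat.log p ⌊x⌋₊ + 1), factoredCount s ⌊x / (p : ℝ) ^ a⌋₊ := by
  simp only [factoredCount_insert hp hps, ← Nat.cast_pow, Nat.floor_div_natCast]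

/-- The volume of the simplex `{t ∈ [0,∞)^s | ∑ p ∈ s, t p * log p ≤ L}`, whose lattice points
are counted by `factoredCount s ⌊exp L⌋₊`. -/
noncomputable def simplexVolume (s : Finset ℕ) (L : ℝ) : ℝ :=
  L ^ #s / ((#s)! * ∏ p ∈ s, log p)

theorem simplexVolume_eq_prod (s : Finset ℕ) (L : ℝ) :
    simplexVolume s L = 1 / (#s)! * ∏ p ∈ s, L / log p := by
  rw [simplexVolume, prod_div_distrib, prod_const, div_mul_div_comm, one_mul]

theorem simplexVolume_mul (s : Finset ℕ) (c L : ℝ) :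
    simplexVolume s (c * L) = c ^ #s * simplexVolume s L := by
  rw [simplexVolume, simplexVolume, mul_pow, mul_div_assoc]

theorem simplexVolume_insert {p : ℕ} {s : Finset ℕ} (hps : p ∉ s) (L : ℝ) :
    simplexVolume (insert p s) L =
      L ^ (#s + 1) / ((#s + 1) * log p) / ((#s)! * ∏ q ∈ s, log q) := by
  rw [simplexVolume, card_insert_of_notMem hps, prod_insert hps, Nat.factorial_succ, div_div]
  push_cast
  ring_nf

theorem sum_simplexVolume (s t : Finset ℕ) (f : ℕ → ℝ) :
    ∑ a ∈ t, simplexVolume s (f a) = (∑ a ∈ t, f a ^ #s) / ((#s)! * ∏ p ∈ s, log p) := by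
  simp only [simplexVolume, sum_div]

theorem factoredCount_floor_mem_Icc {s : Finset ℕ} (hs : ∀ p ∈ s, p.Prime) {x : ℝ}
    (hx : 1 ≤ x) :
    (factoredCount s ⌊x⌋₊ : ℝ) ∈
      Set.Icc (simplexVolume s (log x)) (simplexVolume s (log x + ∑ p ∈ s, log p)) := by
  induction s using Finset.induction_on generalizing x with
  | empty => simp [simplexVolume, factoredCount_empty ((Nat.one_le_floor_iff x).mpr hx)]
  | insert p s hps ih =>
    obtain ⟨hp, hs⟩ := forall_mem_insert _ _ _ |>.mp hs
    set M := Nat.log p ⌊x⌋₊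
    have hu : 0 < log p := log_pos (by exact_mod_cast hp.one_lt)
    have hM : M * log p ≤ log x := natLog_floor_mul_log_le hp.pos hx
    have hM' : log x < (M + 1) * log p :=
      log_lt_natLog_floor_add_one_mul_log hp.one_lt (by linarith)
    have hlog : ∀ a : ℕ, log (x / (p : ℝ) ^ a) = log x - a * log p := fun a => by
      rw [log_div (by linarith) (pow_ne_zero a (by exact_mod_cast hp.ne_zero)), log_pow]
    have hxa : ∀ a ∈ range (M + 1), 1 ≤ x / (p : ℝ) ^ a := fun a ha => by
      have haM : (a : ℝ) ≤ M := by exact_mod_cast mem_range_succ_iff.mp ha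
      rw [← log_nonneg_iff (div_pos (by linarith) (pow_pos (by exact_mod_cast hp.pos) a)), hlog]
      nlinarith
    rw [factoredCount_insert_floor hp hps, Nat.cast_sum]
    constructor
    · calc simplexVolume (insert p s) (log x)
          = log x ^ (#s + 1) / ((#s + 1) * log p) / ((#s)! * ∏ q ∈ s, log q) :=
            simplexVolume_insert hps _
        _ ≤ ∑ a ∈ range (M + 1), simplexVolume s (log (x / (p : ℝ) ^ a)) := by
            simp only [hlog, sum_simplexVolume]
            gcongr
            rw [div_le_iff₀ (by positivity), mul_comm]
            exact pow_succ_le_mul_sum_pow hM hM'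
        _ ≤ _ := sum_le_sum fun a ha => (ih hs (hxa a ha)).1
    · calc ∑ a ∈ range (M + 1), (factoredCount s ⌊x / (p : ℝ) ^ a⌋₊ : ℝ)
          ≤ ∑ a ∈ range (M + 1), simplexVolume s (log (x / (p : ℝ) ^ a) + ∑ q ∈ s, log q) :=
            sum_le_sum fun a ha => (ih hs (hxa a ha)).2
        _ ≤ (log x + ∑ q ∈ s, log q + log p) ^ (#s + 1) / ((#s + 1) * log p) /
              ((#s)! * ∏ q ∈ s, log q) := by
            simp only [hlog, sum_simplexVolume, sub_add_eq_add_sub]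
            gcongr
            rw [le_div_iff₀ (by positivity), mul_comm]
            have hS : 0 ≤ ∑ q ∈ s, log q := sum_nonneg fun q hq => log_natCast_nonneg q
            exact mul_sum_pow_le_pow_succ hu.le (by linarith)
        _ = simplexVolume (insert p s) (log x + ∑ q ∈ insert p s, log q) := by
            rw [simplexVolume_insert hps, sum_insert hps, add_comm (log p), add_assoc]

theorem exp_sub_one_le_mul_exp (z : ℝ) : exp z - 1 ≤ z * exp z := by
  have h := mul_le_mul_of_nonneg_right (add_one_le_exp (-z)) (exp_pos z).le
  rw [← exp_add, neg_add_cancel, exp_zero] at h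
  linarith

theorem one_add_pow_sub_one_le {t : ℝ} (ht : 0 ≤ t) (k : ℕ) :
    (1 + t) ^ k - 1 ≤ k * t * exp (k * t) := by
  have h : (1 + t) ^ k ≤ exp (k * t) := by
    rw [exp_nat_mul]
    exact pow_le_pow_left₀ (by linarith) (by linarith [add_one_le_exp t]) k
  linarith [exp_sub_one_le_mul_exp (k * t)]

theorem factoredCount_eq_simplexVolume_mul {s : Finset ℕ} (hs : ∀ p ∈ s, p.Prime) {x : ℝ}
    (hx : 1 < x) :
    ∃ E : ℝ, 0 ≤ E ∧ E ≤ #s * (∑ p ∈ s, log p) / log x * exp (#s * (∑ p ∈ s, log p) / log x) ∧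
      (factoredCount s ⌊x⌋₊ : ℝ) = simplexVolume s (log x) * (1 + E) := by
  obtain ⟨hlower, hupper⟩ := factoredCount_floor_mem_Icc hs hx.le
  have hL : 0 < log x := log_pos hx
  set S := ∑ p ∈ s, log p
  have hV : 0 < simplexVolume s (log x) := by
    refine div_pos (by positivity) (mul_pos (by positivity) (prod_pos fun p hp => ?_))
    exact log_pos (by exact_mod_cast (hs p hp).one_lt)
  have hS : 0 ≤ S := sum_nonneg fun p _ => log_natCast_nonneg p
  have hshift : simplexVolume s (log x + S) = (1 + S / log x) ^ #s * simplexVolume s (log x) := by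
    rw [← simplexVolume_mul, add_mul, one_mul, div_mul_cancel₀ _ hL.ne']
  refine ⟨factoredCount s ⌊x⌋₊ / simplexVolume s (log x) - 1, ?_, ?_, ?_⟩
  · rw [sub_nonneg, one_le_div hV]
    exact hlower
  · calc (factoredCount s ⌊x⌋₊ : ℝ) / simplexVolume s (log x) - 1
        ≤ (1 + S / log x) ^ #s - 1 := by
          rw [hshift] at hupper
          gcongr
          rwa [div_le_iff₀ hV]
      _ ≤ _ := by
          rw [mul_div_assoc]
          exact one_add_pow_sub_one_le (by positivity) _
  · field_simp
    ring

theorem PsiCop_eq_factoredCount (x y : ℝ) (q : ℕ) :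
    PsiCop x y q = factoredCount ((primesUpTo y).filter (fun p => ¬ p ∣ q)) ⌊x⌋₊ := by
  refine congrArg card (filter_congr fun n hn => ?_)
  have hn : n ≠ 0 := by rw [mem_Icc] at hn; omega
  have hcop : n.Coprime q ↔ ∀ p ∈ n.primeFactors, ¬ p ∣ q := by
    refine ⟨fun h p hp hpq => (Nat.prime_of_mem_primeFactors hp).one_lt.ne'
      (Nat.eq_one_of_dvd_coprimes h (Nat.dvd_of_mem_primeFactors hp) hpq),
      fun h => Nat.coprime_of_dvd ?_⟩
    exact fun p hp hpn => h p (Nat.mem_primeFactors.mpr ⟨hp, hpn, hn⟩)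
  rw [hcop, ← forall₂_and]
  refine forall₂_congr fun p hp => ?_
  rw [mem_filter, primesUpTo, mem_filter, mem_Iic,
    Nat.le_floor_iff' (Nat.prime_of_mem_primeFactors hp).ne_zero]
  simp [Nat.prime_of_mem_primeFactors hp]

theorem primesUpTo_eq_primesLE (y : ℝ) : primesUpTo y = Nat.primesLE ⌊y⌋₊ := by
  ext p
  simp [primesUpTo, Nat.mem_primesLE]

theorem log_four_le_two : log 4 ≤ 2 := by
  rw [show (4 : ℝ) = 2 ^ 2 by norm_num, log_pow]
  push_cast
  linarith [log_two_lt_d9]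

theorem sum_log_primesUpTo_le {y : ℝ} (hy : 0 ≤ y) : ∑ p ∈ primesUpTo y, log p ≤ 2 * y := by
  rw [primesUpTo_eq_primesLE, ← Chebyshev.theta_eq_sum_primesLE]
  nlinarith [Chebyshev.theta_le_log4_mul_x hy, log_four_le_two]

theorem sqrt_le_two_mul_div_log {y : ℝ} (hy : 1 < y) : √y ≤ 2 * y / log y := by
  have hlog : log y ≤ 2 * √y := by
    have h := log_le_self (sqrt_nonneg y)
    rw [log_sqrt (by linarith)] at h
    linarith
  rw [le_div_iff₀ (log_pos hy)]
  nlinarith [mul_self_sqrt (by linarith : 0 ≤ y), sqrt_nonneg y]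

theorem card_primesUpTo_le {y : ℝ} (hy : 1 < y) : (#(primesUpTo y) : ℝ) ≤ 6 * y / log y := by
  rw [primesUpTo_eq_primesLE, Nat.primesLE_card_eq_primeCounting]
  have hlog := log_pos hy
  calc (Nat.primeCounting ⌊y⌋₊ : ℝ) ≤ log 4 * y / log √y + √y := Chebyshev.pi_le_log4_mul_div hy
    _ ≤ 4 * y / log y + 2 * y / log y := by
        rw [log_sqrt (by linarith), div_div_eq_mul_div]
        refine add_le_add (div_le_div_of_nonneg_right ?_ hlog.le) (sqrt_le_two_mul_div_log hy)
        nlinarith [log_four_le_two]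
    _ = 6 * y / log y := by ring

theorem card_mul_sum_log_le {s : Finset ℕ} {y : ℝ} (hs : s ⊆ primesUpTo y) (hy : 1 < y) :
    #s * ∑ p ∈ s, log p ≤ 12 * y ^ 2 / log y := by
  have hsum : ∑ p ∈ s, log p ≤ 2 * y :=
    (sum_le_sum_of_subset_of_nonneg hs fun p _ _ => log_natCast_nonneg p).trans
      (sum_log_primesUpTo_le (by linarith))
  have hcard : (#s : ℝ) ≤ 6 * y / log y :=
    (Nat.cast_le.mpr (card_le_card hs)).trans (card_primesUpTo_le hy)
  calc #s * ∑ p ∈ s, log p ≤ 6 * y / log y * (2 * y) :=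
        mul_le_mul hcard hsum (sum_nonneg fun p _ => log_natCast_nonneg p)
          (div_nonneg (by linarith) (log_pos hy).le)
    _ = 12 * y ^ 2 / log y := by ring

/-- Ennola-type formula: for `16 ≤ x` and `2 ≤ y ≤ √(log x)`,
`Ψ_q(x,y) = (1/π_q(y)!) ∏_{p ≤ y, p ∤ q} (log x/log p) · (1 + O(y²/(log x log y)))`. -/
theorem PsiCop_ennola_formula :
    ∃ C : ℝ, ∀ (x y : ℝ) (q : ℕ), 16 ≤ x → 2 ≤ y → y ≤ Real.sqrt (Real.log x) →
      ∃ E : ℝ, |E| ≤ C * y ^ 2 / (Real.log x * Real.log y) ∧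
        (PsiCop x y q : ℝ) =
          (1 / (Nat.factorial ((primesUpTo y).filter (fun (p : ℕ) => ¬ p ∣ q)).card : ℝ)) *
            (∏ p ∈ (primesUpTo y).filter (fun (p : ℕ) => ¬ p ∣ q),
              Real.log x / Real.log p) * (1 + E) := by
  refine ⟨12 * exp 18, fun x y q hx hy hyx => ?_⟩
  set P := (primesUpTo y).filter (fun p => ¬ p ∣ q)
  have hP : ∀ p ∈ P, p.Prime := fun p hp => (mem_filter.mp (mem_filter.mp hp).1).2
  obtain ⟨E, hE0, hE, hcount⟩ := factoredCount_eq_simplexVolume_mul hP (by linarith : 1 < x)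
  have hly : 0 < log y := log_pos (by linarith)
  have hy2 : y ^ 2 ≤ log x := (le_sqrt (by linarith) (log_nonneg (by linarith))).mp hyx
  have hlx : 0 < log x := by nlinarith
  have hz : #P * (∑ p ∈ P, log p) / log x ≤ 12 * y ^ 2 / (log x * log y) := by
    rw [mul_comm (log x), ← div_div]
    gcongr
    exact card_mul_sum_log_le (filter_subset _ _) (by linarith)
  have hz18 : 12 * y ^ 2 / (log x * log y) ≤ 18 := by
    rw [div_le_iff₀ (by positivity)]
    nlinarith [log_le_log (by norm_num) hy, log_two_gt_d9]
  refine ⟨E, ?_, ?_⟩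
  · rw [abs_of_nonneg hE0]
    calc E ≤ 12 * y ^ 2 / (log x * log y) * exp 18 :=
          hE.trans (mul_le_mul hz (exp_le_exp.mpr (hz.trans hz18)) (exp_pos _).le (by positivity))
      _ = _ := by ring
  · rw [PsiCop_eq_factoredCount, hcount, simplexVolume_eq_prod]
end

section
/- Let χ be a Dirichlet character modulo q, let 0 < α ≤ 1, let t be real, and let y ≥ 4. Then ∏_{√y < p ≤ y prime, p ∤ q} | (1 − p^{−α}) / (1 − χ(p)·p^{−α−it}) | ≤ exp( − ∑_{√y < p ≤ y prime, p ∤ q} (1 − Re(χ(p)·p^{−it}))/p^α ). -/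
/-!
Factor by factor: with `x = p^{-α} ∈ [0, 1)` and `z = χ(p) p^{-it}` on the unit circle, the claim
is `(1 - x) exp((1 - Re z) x) ≤ ‖1 - z x‖`. After squaring, the right side `1 - 2 x Re z + x²` is
affine in `Re z ∈ [-1, 1]` and the left side is convex in it, so only `Re z = ±1` matter.
`Re z = 1` is an equality, and `Re z = -1` is `(1 - x) e^{2x} ≤ 1 + x`, i.e. `2x` is at most
`log (1 + x) - log (1 - x) = 2 artanh x`, the first term of its power series.
-/

open Complex

theorem Real.two_mul_le_log_one_add_sub_log_one_sub {x : ℝ} (hx0 : 0 ≤ x) (hx1 : x < 1) :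
    2 * x ≤ Real.log (1 + x) - Real.log (1 - x) := by
  have hx : |x| < 1 := abs_lt.2 ⟨by linarith, hx1⟩
  simpa using le_hasSum (Real.hasSum_log_sub_log_of_abs_lt_one hx) 0 fun k _ => by positivity

theorem Real.one_sub_mul_exp_two_mul_le {x : ℝ} (hx0 : 0 ≤ x) (hx1 : x < 1) :
    (1 - x) * Real.exp (2 * x) ≤ 1 + x := by
  have hexp : Real.exp (2 * x) ≤ (1 + x) / (1 - x) := by
    calc Real.exp (2 * x) ≤ Real.exp (Real.log (1 + x) - Real.log (1 - x)) :=
          Real.exp_le_exp.2 (Real.two_mul_le_log_one_add_sub_log_one_sub hx0 hx1)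
      _ = (1 + x) / (1 - x) := by
        rw [Real.exp_sub, Real.exp_log (by linarith), Real.exp_log (by linarith)]
  rwa [le_div_iff₀ (by linarith), mul_comm] at hexp

theorem Complex.norm_one_sub_mul_ofReal_sq {z : ℂ} (hz : ‖z‖ = 1) (x : ℝ) :
    ‖1 - z * x‖ ^ 2 = 1 - 2 * z.re * x + x ^ 2 := by
  have hz2 : z.re ^ 2 + z.im ^ 2 = 1 := by
    rw [← one_pow 2, ← hz, Complex.sq_norm, Complex.normSq_apply]; ring
  rw [Complex.sq_norm, Complex.normSq_apply]
  simp only [Complex.sub_re, Complex.sub_im, Complex.mul_re, Complex.mul_im, Complex.ofReal_re,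
    Complex.ofReal_im, Complex.one_re, Complex.one_im]
  linear_combination x ^ 2 * hz2

theorem Complex.one_sub_mul_exp_le_norm_one_sub_mul {x : ℝ} (hx0 : 0 ≤ x) (hx1 : x < 1)
    {z : ℂ} (hz : ‖z‖ = 1) : (1 - x) * Real.exp ((1 - z.re) * x) ≤ ‖1 - z * x‖ := by
  set c := z.re
  obtain ⟨hc1, hc2⟩ : -1 ≤ c ∧ c ≤ 1 := abs_le.1 (hz ▸ Complex.abs_re_le_norm z)
  have hconv : Real.exp (2 * ((1 - c) * x)) ≤ (1 - c) / 2 * Real.exp (4 * x) + (1 + c) / 2 := by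
    have h := convexOn_exp.2 (Set.mem_univ (4 * x)) (Set.mem_univ 0)
      (by linarith : 0 ≤ (1 - c) / 2) (by linarith : 0 ≤ (1 + c) / 2) (by ring)
    simp only [smul_eq_mul, Real.exp_zero, mul_zero, add_zero, mul_one] at h
    rwa [show 2 * ((1 - c) * x) = (1 - c) / 2 * (4 * x) by ring]
  have hend : (1 - x) ^ 2 * Real.exp (4 * x) ≤ (1 + x) ^ 2 := by
    calc (1 - x) ^ 2 * Real.exp (4 * x) = ((1 - x) * Real.exp (2 * x)) ^ 2 := by
          rw [mul_pow, ← Real.exp_nat_mul]; ring_nf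
      _ ≤ (1 + x) ^ 2 := pow_le_pow_left₀ (mul_nonneg (by linarith) (Real.exp_pos _).le)
          (Real.one_sub_mul_exp_two_mul_le hx0 hx1) 2
  have hsq : ((1 - x) * Real.exp ((1 - c) * x)) ^ 2 ≤ ‖1 - z * x‖ ^ 2 := by
    rw [Complex.norm_one_sub_mul_ofReal_sq hz, mul_pow, ← Real.exp_nat_mul]
    push_cast
    nlinarith [mul_le_mul_of_nonneg_left hconv (sq_nonneg (1 - x)),
      mul_le_mul_of_nonneg_left hend (by linarith : 0 ≤ (1 - c) / 2)]
  exact (pow_le_pow_iff_left₀ (mul_nonneg (by linarith) (Real.exp_pos _).le) (norm_nonneg _)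
    two_ne_zero).1 hsq

theorem Complex.norm_ofReal_one_sub_div_one_sub_mul_le_exp {x : ℝ} (hx0 : 0 ≤ x) (hx1 : x < 1)
    {z : ℂ} (hz : ‖z‖ = 1) :
    ‖((1 - x : ℝ) : ℂ) / (1 - z * x)‖ ≤ Real.exp (-((1 - z.re) * x)) := by
  have hle := Complex.one_sub_mul_exp_le_norm_one_sub_mul hx0 hx1 hz
  have hpos : 0 < ‖1 - z * x‖ := lt_of_lt_of_le (by positivity [sub_pos.2 hx1]) hle
  rw [norm_div, Complex.norm_real, Real.norm_of_nonneg (by linarith), div_le_iff₀ hpos,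
    Real.exp_neg, inv_mul_eq_div, le_div_iff₀ (Real.exp_pos _)]
  exact hle

theorem DirichletCharacter.norm_apply_prime_eq_one {R : Type*} [NormedField R] {q : ℕ}
    (χ : DirichletCharacter R q) {p : ℕ} (hp : p.Prime) (hpq : ¬p ∣ q) : ‖χ p‖ = 1 := by
  have hu : IsUnit (p : ZMod q) := (ZMod.isUnit_prime_iff_not_dvd hp).2 hpq
  simpa [hu.unit_spec] using χ.unit_norm_eq_one hu.unit

theorem Complex.natCast_cpow_neg_ofReal_add {n : ℕ} (hn : n ≠ 0) (a : ℝ) (s : ℂ) :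
    (n : ℂ) ^ (-(a + s)) = (((n : ℝ) ^ (-a) : ℝ) : ℂ) * (n : ℂ) ^ (-s) := by
  rw [neg_add, Complex.cpow_add _ _ (Nat.cast_ne_zero.2 hn),
    Complex.ofReal_cpow (Nat.cast_nonneg n)]
  push_cast
  rfl

theorem euler_product_ratio_bound_general
    {q : ℕ} (χ : DirichletCharacter ℂ q) (α t y : ℝ)
    (hα0 : 0 < α) :
    (∏ p ∈ (primesUpTo y).filter (fun (p : ℕ) => Real.sqrt y < (p : ℝ) ∧ ¬ p ∣ q),
        ‖(((1 - (p : ℝ) ^ (-α) : ℝ)) : ℂ) /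
          (1 - χ (p : ZMod q) * (p : ℂ) ^ (-((α : ℂ) + (t : ℂ) * Complex.I)))‖) ≤
      Real.exp
        (-∑ p ∈ (primesUpTo y).filter (fun (p : ℕ) => Real.sqrt y < (p : ℝ) ∧ ¬ p ∣ q),
          (1 - (χ (p : ZMod q) * (p : ℂ) ^ (-((t : ℂ) * Complex.I))).re) / (p : ℝ) ^ α) := by
  rw [← Finset.sum_neg_distrib, Real.exp_sum]
  refine Finset.prod_le_prod (fun _ _ => norm_nonneg _) fun p hp => ?_
  obtain ⟨hp, -, hpq⟩ : p.Prime ∧ Real.sqrt y < p ∧ ¬p ∣ q := by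
    simp only [primesUpTo, Finset.mem_filter] at hp
    exact ⟨hp.1.2, hp.2⟩
  have hp1 : (1 : ℝ) < p := mod_cast hp.one_lt
  have hx0 : 0 ≤ (p : ℝ) ^ (-α) := Real.rpow_nonneg (by linarith) _
  have hx1 : (p : ℝ) ^ (-α) < 1 := Real.rpow_lt_one_of_one_lt_of_neg hp1 (neg_neg_of_pos hα0)
  have hz : ‖χ p * (p : ℂ) ^ (-((t : ℂ) * Complex.I))‖ = 1 := by
    rw [norm_mul, χ.norm_apply_prime_eq_one hp hpq, Complex.norm_natCast_cpow_of_pos hp.pos]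
    simp
  rw [Complex.natCast_cpow_neg_ofReal_add hp.ne_zero, mul_left_comm, mul_comm _ (χ p * _),
    div_eq_mul_inv _ ((p : ℝ) ^ α), ← Real.rpow_neg (by linarith)]
  exact Complex.norm_ofReal_one_sub_div_one_sub_mul_le_exp hx0 hx1 hz

/-- For a Dirichlet character `χ (mod q)`, `0 < α ≤ 1`, `t` real and `y ≥ 4`:
`∏_{√y < p ≤ y, p ∤ q} |(1 - p^{-α})/(1 - χ(p)p^{-α-it})|
  ≤ exp(-∑_{√y < p ≤ y, p ∤ q} (1 - Re(χ(p)p^{-it}))/p^α)`. -/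
theorem euler_product_ratio_bound
    {q : ℕ} (χ : DirichletCharacter ℂ q) (α t y : ℝ)
    (hα0 : 0 < α) (hα1 : α ≤ 1) (hy : 4 ≤ y) :
    (∏ p ∈ (primesUpTo y).filter (fun (p : ℕ) => Real.sqrt y < (p : ℝ) ∧ ¬ p ∣ q),
        ‖(((1 - (p : ℝ) ^ (-α) : ℝ)) : ℂ) /
          (1 - χ (p : ZMod q) * (p : ℂ) ^ (-((α : ℂ) + (t : ℂ) * Complex.I)))‖) ≤
      Real.exp
        (-∑ p ∈ (primesUpTo y).filter (fun (p : ℕ) => Real.sqrt y < (p : ℝ) ∧ ¬ p ∣ q),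
          (1 - (χ (p : ZMod q) * (p : ℂ) ^ (-((t : ℂ) * Complex.I))).re) / (p : ℝ) ^ α) :=
  euler_product_ratio_bound_general χ α t y hα0
end

section
/- For every c > 0 there exists a constant C = C(c) such that for every prime p₀, every real θ, every x with log log x ≥ 3, and every ε ≥ (log log x)^{−1/15}: ∫_{|t| ≥ ε} (log x)^{ −c·(1 − cos(θ − t·log p₀)) } · dt/( |t|·(1+|t|)^8 ) ≤ (C/ε) · ( (log log x)^{−2/5} + exp( −(log log x)^{1/5}/C ) ). -/
/-!
Since `1/|t| ≤ 1/ε` on the domain, it suffices to bound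
`∫_ℝ e^{-cL(1 - cos(θ - t log p₀))} (1+|t|)^{-8} dt` by `O(L^{-2/5})`, where `L = log log x`.
Put `T = L^{1/15}` and `w = L^{-7/15}`. For `|t| > T` the weight alone is
`≤ (1+T)^{-6} (1+t²)^{-1}`. For `|t| ≤ T`, the phase `θ - t log p₀` stays at distance `≥ w`
from `2πℤ` except on `O(T log p₀)` intervals of length `2w / log p₀`, of total measure
`O(Tw) = O(L^{-2/5})` because `log p₀ ≥ log 2`; off these intervals `1 - cos ≥ 2w²/π²`, so the
integrand is at most `exp(-2cL^{1/15}/π²) ≤ 6! (π²/2c)^6 L^{-2/5}`.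
-/

open MeasureTheory Real Set Metric
open scoped Finset

lemma card_Icc_ceil_floor_le {x y : ℝ} (hxy : x ≤ y) :
    (#(Finset.Icc ⌈x⌉ ⌊y⌋) : ℝ) ≤ y - x + 1 := by
  have hle : ⌈x⌉ ≤ ⌊y⌋ + 1 :=
    Int.ceil_le.mpr (by push_cast; linarith [Int.lt_floor_add_one y])
  have hcard : ((#(Finset.Icc ⌈x⌉ ⌊y⌋) : ℤ) : ℝ) = ⌊y⌋ + 1 - ⌈x⌉ := by
    exact_mod_cast Int.card_Icc_of_le _ _ hle
  push_cast at hcard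
  linarith [Int.floor_le y, Int.le_ceil x]

lemma volume_Icc_inter_iUnion_closedBall_le {T a h r : ℝ} (hT : 0 ≤ T) (hh : 0 < h)
    (hr : 0 ≤ r) :
    volume (Icc (-T) T ∩ ⋃ k : ℤ, closedBall (a + k * h) r) ≤
      ENNReal.ofReal ((2 * (T + r) / h + 1) * (2 * r)) := by
  set K := Finset.Icc ⌈(-T - r - a) / h⌉ ⌊(T + r - a) / h⌋
  have hsub : Icc (-T) T ∩ ⋃ k : ℤ, closedBall (a + k * h) r ⊆
      ⋃ k ∈ K, closedBall (a + k * h) r := by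
    rintro t ⟨⟨htl, htu⟩, ht⟩
    obtain ⟨k, hk⟩ := mem_iUnion.mp ht
    rw [mem_closedBall, Real.dist_eq, abs_le] at hk
    refine mem_iUnion₂.mpr ⟨k, Finset.mem_Icc.mpr ⟨?_, ?_⟩, mem_closedBall.mpr ?_⟩
    · exact Int.ceil_le.mpr ((div_le_iff₀ hh).mpr (by linarith))
    · exact Int.le_floor.mpr ((le_div_iff₀ hh).mpr (by linarith))
    · rw [Real.dist_eq, abs_le]; exact hk
  have hK : (#K : ℝ) ≤ 2 * (T + r) / h + 1 := by
    refine (card_Icc_ceil_floor_le ?_).trans_eq (by ring)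
    gcongr; linarith
  calc volume (Icc (-T) T ∩ ⋃ k : ℤ, closedBall (a + k * h) r)
      ≤ volume (⋃ k ∈ K, closedBall (a + k * h) r) := measure_mono hsub
    _ ≤ ∑ k ∈ K, volume (closedBall (a + k * h) r) := measure_biUnion_finset_le _ _
    _ = ENNReal.ofReal (#K * (2 * r)) := by
      simp only [Real.volume_closedBall, Finset.sum_const, nsmul_eq_mul]
      rw [ENNReal.ofReal_mul (Nat.cast_nonneg _), ENNReal.ofReal_natCast]
    _ ≤ _ := ENNReal.ofReal_le_ofReal (by gcongr)

lemma mul_sq_le_one_sub_cos {φ w : ℝ} (hw : 0 ≤ w) (h : ∀ k : ℤ, w ≤ |φ - k * (2 * π)|) :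
    2 / π ^ 2 * w ^ 2 ≤ 1 - cos φ := by
  set k := round (φ / (2 * π))
  have hred : |φ - k * (2 * π)| ≤ π := by
    have h2π : 0 < 2 * π := by positivity
    calc |φ - k * (2 * π)| = |φ / (2 * π) - k| * (2 * π) := by
          rw [← abs_of_pos h2π, ← abs_mul, abs_of_pos h2π]; congr 1; field_simp
      _ ≤ 1 / 2 * (2 * π) := by gcongr; exact abs_sub_round _
      _ = π := by ring
  have hcos := cos_le_one_sub_mul_cos_sq hred
  rw [cos_sub_int_mul_two_pi] at hcos
  have hsq : w ^ 2 ≤ (φ - k * (2 * π)) ^ 2 := by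
    simpa only [sq_abs] using pow_le_pow_left₀ hw (h k) 2
  have : 2 / π ^ 2 * w ^ 2 ≤ 2 / π ^ 2 * (φ - k * (2 * π)) ^ 2 := by gcongr
  linarith

lemma exp_neg_le_factorial_div_pow {u : ℝ} (hu : 0 < u) (n : ℕ) :
    exp (-u) ≤ n.factorial / u ^ n := by
  rw [exp_neg, inv_le_comm₀ (exp_pos u) (by positivity), inv_div]
  exact pow_div_factorial_le_exp u hu.le n

lemma one_add_sq_le_one_add_abs_pow (t : ℝ) {n : ℕ} (hn : 2 ≤ n) :
    1 + t ^ 2 ≤ (1 + |t|) ^ n :=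
  calc 1 + t ^ 2 ≤ (1 + |t|) ^ 2 := by nlinarith [abs_nonneg t, sq_abs t]
    _ ≤ (1 + |t|) ^ n := pow_le_pow_right₀ (by linarith [abs_nonneg t]) hn

lemma integrable_div_one_add_abs_pow {f : ℝ → ℝ} (hf : Continuous f) (hf1 : ∀ t, ‖f t‖ ≤ 1)
    {n : ℕ} (hn : 2 ≤ n) : Integrable fun t => f t / (1 + |t|) ^ n := by
  refine integrable_inv_one_add_sq.mono'
    (hf.div (by fun_prop) fun t => by positivity).aestronglyMeasurable (ae_of_all _ fun t => ?_)
  rw [norm_div, norm_pow, Real.norm_of_nonneg (by positivity : 0 ≤ 1 + |t|), ← one_div]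
  gcongr
  · exact hf1 t
  · exact one_add_sq_le_one_add_abs_pow t hn

lemma setIntegral_div_abs_le {g : ℝ → ℝ} {ε : ℝ} (hε : 0 < ε) (hg : Integrable g)
    (hg0 : 0 ≤ g) :
    ∫ t in {t : ℝ | ε ≤ |t|}, g t / |t| ≤ (∫ t, g t) / ε := by
  have hS : MeasurableSet {t : ℝ | ε ≤ |t|} := measurableSet_le measurable_const measurable_abs
  calc _ ≤ ∫ t in {t : ℝ | ε ≤ |t|}, g t / ε :=
        integral_mono_of_nonneg (ae_of_all _ fun t => div_nonneg (hg0 t) (abs_nonneg t))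
          (hg.div_const ε).integrableOn
          ((ae_restrict_iff' hS).2
            (ae_of_all _ fun t ht => div_le_div_of_nonneg_left (hg0 t) hε ht))
    _ ≤ ∫ t, g t / ε :=
        setIntegral_le_integral (hg.div_const ε) (ae_of_all _ fun t => div_nonneg (hg0 t) hε.le)
    _ = _ := integral_div ε g

section
variable {c L ω θ w T : ℝ}

lemma exp_neg_mul_one_sub_cos_le_one (hc : 0 ≤ c) (hL : 0 ≤ L) (φ : ℝ) :
    exp (-(c * (1 - cos φ) * L)) ≤ 1 := by
  have : 0 ≤ 1 - cos φ := sub_nonneg.mpr (cos_le_one φ)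
  rw [exp_le_one_iff, neg_nonpos]
  positivity

lemma exp_neg_mul_one_sub_cos_div_le (hc : 0 ≤ c) (hL : 0 ≤ L) (hω : 0 < ω) (hw : 0 ≤ w)
    (hT : 0 ≤ T) (t : ℝ) :
    exp (-(c * (1 - cos (θ - t * ω)) * L)) / (1 + |t|) ^ 8 ≤
      (exp (-(2 * c / π ^ 2 * w ^ 2 * L)) + ((1 + T) ^ 6)⁻¹) * (1 + t ^ 2)⁻¹ +
        (Icc (-T) T ∩ ⋃ k : ℤ, closedBall (θ / ω + k * (2 * π / ω)) (w / ω)).indicator 1 t := by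
  set B := Icc (-T) T ∩ ⋃ k : ℤ, closedBall (θ / ω + k * (2 * π / ω)) (w / ω)
  set E := exp (-(2 * c / π ^ 2 * w ^ 2 * L))
  have hexp := exp_neg_mul_one_sub_cos_le_one hc hL (θ - t * ω)
  have h1t : 1 ≤ 1 + |t| := le_add_of_nonneg_right (abs_nonneg t)
  have hsq : 1 + t ^ 2 ≤ (1 + |t|) ^ 8 := one_add_sq_le_one_add_abs_pow t (by norm_num)
  by_cases htB : t ∈ B
  · rw [indicator_of_mem htB, Pi.one_apply]
    calc _ ≤ (1 : ℝ) := div_le_one_of_le₀ (hexp.trans (one_le_pow₀ h1t)) (by positivity)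
      _ ≤ _ := le_add_of_nonneg_left (by positivity)
  rw [indicator_of_notMem htB, add_zero]
  by_cases htT : |t| ≤ T
  · have hfar : ∀ k : ℤ, w ≤ |θ - t * ω - k * (2 * π)| := by
      intro k
      by_contra! hlt
      refine htB ⟨abs_le.mp htT, mem_iUnion.mpr ⟨-k, ?_⟩⟩
      have hdist : dist t (θ / ω + ((-k : ℤ) : ℝ) * (2 * π / ω)) =
          |θ - t * ω - k * (2 * π)| / ω := by
        rw [Real.dist_eq, eq_div_iff hω.ne', ← abs_of_pos hω, ← abs_mul, ← abs_neg,
          abs_of_pos hω]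
        congr 1
        push_cast
        field_simp
        ring
      rw [mem_closedBall, hdist]
      gcongr
    have hE : exp (-(c * (1 - cos (θ - t * ω)) * L)) ≤ E := by
      have := mul_sq_le_one_sub_cos hw hfar
      refine exp_le_exp.mpr (neg_le_neg ?_)
      calc 2 * c / π ^ 2 * w ^ 2 * L = c * (2 / π ^ 2 * w ^ 2) * L := by ring
        _ ≤ _ := by gcongr
    calc _ ≤ E / (1 + t ^ 2) := div_le_div₀ (by positivity) hE (by positivity) hsq
      _ ≤ _ := by
        rw [div_eq_mul_inv]
        gcongr
        exact le_add_of_nonneg_right (by positivity)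
  · push Not at htT
    calc _ ≤ 1 / (1 + |t|) ^ 8 := by gcongr
      _ ≤ 1 / ((1 + T) ^ 6 * (1 + t ^ 2)) := by
        gcongr
        calc (1 + T) ^ 6 * (1 + t ^ 2) ≤ (1 + |t|) ^ 6 * (1 + |t|) ^ 2 := by
              gcongr
              exact one_add_sq_le_one_add_abs_pow t le_rfl
          _ = (1 + |t|) ^ 8 := by ring
      _ = ((1 + T) ^ 6)⁻¹ * (1 + t ^ 2)⁻¹ := by rw [one_div, mul_inv]
      _ ≤ _ := by
        gcongr
        exact le_add_of_nonneg_left (exp_pos _).le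

lemma integral_exp_neg_mul_one_sub_cos_div_le (hc : 0 ≤ c) (hL : 0 ≤ L) (hω : 0 < ω)
    (hw : 0 ≤ w) (hT : 0 ≤ T) :
    ∫ t, exp (-(c * (1 - cos (θ - t * ω)) * L)) / (1 + |t|) ^ 8 ≤
      π * (exp (-(2 * c / π ^ 2 * w ^ 2 * L)) + ((1 + T) ^ 6)⁻¹) +
        ((T * ω + w) / π + 1) * (2 * w / ω) := by
  set A := exp (-(2 * c / π ^ 2 * w ^ 2 * L)) + ((1 + T) ^ 6)⁻¹
  set B := Icc (-T) T ∩ ⋃ k : ℤ, closedBall (θ / ω + k * (2 * π / ω)) (w / ω)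
  have hBvol : volume B ≤ ENNReal.ofReal (((T * ω + w) / π + 1) * (2 * w / ω)) := by
    refine (volume_Icc_inter_iUnion_closedBall_le hT (by positivity) (by positivity)).trans_eq
      ?_
    congr 1
    field_simp
  have hB : MeasurableSet B :=
    measurableSet_Icc.inter (MeasurableSet.iUnion fun _ => measurableSet_closedBall)
  have hAint : Integrable fun t : ℝ => A * (1 + t ^ 2)⁻¹ := integrable_inv_one_add_sq.const_mul A
  have hBint : Integrable (B.indicator 1) :=
    (integrable_indicator_iff hB).2
      (integrableOn_const (C := (1 : ℝ)) (hBvol.trans_lt ENNReal.ofReal_lt_top).ne)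
  calc _ ≤ ∫ t, (A * (1 + t ^ 2)⁻¹ + B.indicator 1 t) :=
        integral_mono_of_nonneg (ae_of_all _ fun t => by positivity) (hAint.add hBint)
          (ae_of_all _ (exp_neg_mul_one_sub_cos_div_le hc hL hω hw hT))
    _ = π * A + volume.real B := by
      rw [integral_add hAint hBint, integral_const_mul, integral_univ_inv_one_add_sq,
        integral_indicator_one hB, mul_comm]
    _ ≤ _ := by
      gcongr
      exact ENNReal.toReal_le_of_le_ofReal (by positivity) hBvol

end

lemma integral_exp_neg_mul_one_sub_cos_div_le_rpow {c ω θ L : ℝ} (hc : 0 < c)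
    (hω : 1 / 2 ≤ ω) (hL : 1 ≤ L) :
    ∫ t, exp (-(c * (1 - cos (θ - t * ω)) * L)) / (1 + |t|) ^ 8 ≤
      (720 * π * (π ^ 2 / (2 * c)) ^ 6 + 10) * L ^ (-(2 : ℝ) / 5) := by
  obtain ⟨s, hs, rfl⟩ : ∃ s : ℝ, 1 ≤ s ∧ L = s ^ 15 :=
    ⟨L ^ ((1 : ℝ) / 15), one_le_rpow hL (by norm_num), by
      rw [← rpow_natCast, ← rpow_mul (by linarith)]; norm_num⟩
  have hs0 : 0 < s := by linarith
  have hpow : (s ^ 15) ^ (-(2 : ℝ) / 5) = 1 / s ^ 6 := by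
    rw [← rpow_natCast_mul hs0.le, one_div, ← rpow_natCast, ← rpow_neg hs0.le]; norm_num
  have hE : exp (-(2 * c / π ^ 2 * ((s ^ 7)⁻¹) ^ 2 * s ^ 15)) ≤
      720 * (π ^ 2 / (2 * c)) ^ 6 / s ^ 6 := by
    have hu : 2 * c / π ^ 2 * ((s ^ 7)⁻¹) ^ 2 * s ^ 15 = 2 * c / π ^ 2 * s := by
      field_simp
    rw [hu]
    refine (exp_neg_le_factorial_div_pow (by positivity) 6).trans_eq ?_
    simp only [Nat.factorial]
    field_simp
    ring
  have htail : ((1 + s) ^ 6)⁻¹ ≤ 1 / s ^ 6 := by rw [one_div]; gcongr; linarith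
  have hvol : ((s * ω + (s ^ 7)⁻¹) / π + 1) * (2 * (s ^ 7)⁻¹ / ω) ≤ 6 / s ^ 6 := by
    have hω0 : 0 < ω := by linarith
    have e : ((s * ω + (s ^ 7)⁻¹) / π + 1) * (2 * (s ^ 7)⁻¹ / ω) =
        (2 / π + 2 / (π * ω * s ^ 8) + 2 / (ω * s)) / s ^ 6 := by field_simp
    rw [e]
    gcongr
    have h1 : 2 / π ≤ 2 / 3 := by gcongr; exact pi_gt_three.le
    have h2 : 2 / (π * ω * s ^ 8) ≤ 2 / (3 * (1 / 2) * 1) := by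
      gcongr
      · exact pi_gt_three.le
      · exact one_le_pow₀ hs
    have h3 : 2 / (ω * s) ≤ 2 / (1 / 2 * 1) := by gcongr
    linarith
  calc _ ≤ π * (720 * (π ^ 2 / (2 * c)) ^ 6 / s ^ 6 + 1 / s ^ 6) + 6 / s ^ 6 := by
        refine (integral_exp_neg_mul_one_sub_cos_div_le hc.le (by positivity) (by linarith)
          (w := (s ^ 7)⁻¹) (by positivity) hs0.le).trans ?_
        gcongr
    _ = (720 * π * (π ^ 2 / (2 * c)) ^ 6 + π + 6) * (1 / s ^ 6) := by ring
    _ ≤ _ := by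
      rw [hpow]
      exact mul_le_mul_of_nonneg_right (by linarith [pi_lt_four]) (by positivity)

/-- Bound for an oscillating exponential integral over `|t| ≥ ε`:
`∫_{|t| ≥ ε} (log x)^{-c(1 - cos(θ - t log p₀))} dt/(|t|(1+|t|)^8)
  ≪ (1/ε)((log log x)^{-2/5} + e^{-Θ((log log x)^{1/5})})`. -/
theorem oscillating_exponential_integral_bound :
    ∀ c : ℝ, 0 < c → ∃ C : ℝ, 0 < C ∧
      ∀ (p₀ : ℕ), p₀.Prime → ∀ θ x ε : ℝ,
        3 ≤ Real.log (Real.log x) →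
        Real.log (Real.log x) ^ (-(1 : ℝ) / 15) ≤ ε →
        (∫ t in {t : ℝ | ε ≤ |t|},
            Real.exp (-(c * (1 - Real.cos (θ - t * Real.log p₀)) *
              Real.log (Real.log x))) / (|t| * (1 + |t|) ^ 8)) ≤
          (C / ε) * (Real.log (Real.log x) ^ (-(2 : ℝ) / 5) +
            Real.exp (-(Real.log (Real.log x) ^ ((1 : ℝ) / 5)) / C)) := by
  intro c hc
  refine ⟨720 * π * (π ^ 2 / (2 * c)) ^ 6 + 10, by positivity, ?_⟩
  intro p₀ hp θ x ε hL hε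
  have hε0 : 0 < ε := (rpow_pos_of_pos (by linarith) _).trans_le hε
  have hω : 1 / 2 ≤ log p₀ := by
    have := log_le_log two_pos (by exact_mod_cast hp.two_le : (2 : ℝ) ≤ p₀)
    linarith [log_two_gt_d9]
  have hg : Integrable fun t => exp (-(c * (1 - cos (θ - t * log p₀)) * log (log x))) /
      (1 + |t|) ^ 8 :=
    integrable_div_one_add_abs_pow (by fun_prop)
      (fun t => by
        rw [norm_of_nonneg (exp_pos _).le]
        exact exp_neg_mul_one_sub_cos_le_one hc.le (by linarith) _)
      (by norm_num)
  simp_rw [div_mul_eq_div_div_swap (exp _)]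
  calc _ ≤ _ := setIntegral_div_abs_le hε0 hg (fun t => by positivity)
    _ ≤ (720 * π * (π ^ 2 / (2 * c)) ^ 6 + 10) * log (log x) ^ (-(2 : ℝ) / 5) / ε := by
      gcongr
      exact integral_exp_neg_mul_one_sub_cos_div_le_rpow hc hω (by linarith)
    _ ≤ _ := by
      rw [mul_div_right_comm]
      exact mul_le_mul_of_nonneg_left (le_add_of_nonneg_right (exp_pos _).le) (by positivity)
end
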